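/- arXiv:math/0508517 — 4 statements merged into one kernel-verified Lean document; each statement's English description precedes it below -/
import Mathlib

section
/- For a row vector y ∈ ℝⁿ, let ω(y) be the supremum of v > 0 such that |y·q + p| < ‖q‖^{−v} for infinitely many q ∈ ℤⁿ and some p ∈ ℤ. Let u_y be the (n+1)×(n+1) unipotent matrix with first row (1, y) and lower right block I_n, and g_t = diag(e^t, e^{−t/n}, ..., e^{−t/n}). Define γ(y) to be the supremum of all c such that the lattice g_t u_y ℤ^{n+1} contains a nonzero vector of norm less than e^{−ct} for infinitely many t ∈ ℕ. Then ω(y) = n(1 + γ(y)) / (1 − n γ(y)) whenever γ(y) < 1/n. -/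
/-!
The lattice vector `g_t u_y (p, q)` is short exactly when both `e^t |y·q + p|` and
`e^{-t/n} ‖q‖` are small. If `|y·q + p| < ‖q‖^{-v}`, taking `e^t ≈ ‖q‖^α` with
`α = n(v+1)/(n+1)` balances the two coordinates and gives a vector of norm `≲ e^{-ct}` for every
`c < (v - n)/(n(v + 1))`. Conversely, a vector of norm `< e^{-ct}` has `‖q‖ < e^{(1/n - c)t}` and
`|y·q + p| < e^{-(1+c)t}`, an approximation of exponent `v = n(1 + c)/(1 - nc)`. These two
Möbius maps are inverse to each other. The hypothesis `γ(y) < 1/n` excludes relations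
`y·q + p = 0` with `q ≠ 0` (such a vector shrinks like `e^{-t/n}`), so arbitrarily good
approximations come from infinitely many distinct `q`; together with Dirichlet's theorem
(`ω(y) ≥ n`) this pins down `ω(y)`.
-/

open Real ENNReal

/-- Sup norm of an integer vector. -/
def snormZ {n : ℕ} (q : Fin n → ℤ) : ℝ :=
  ((Finset.univ.sup fun i => (q i).natAbs : ℕ) : ℝ)

/-- The Diophantine exponent `ω(y)` of a row vector `y ∈ ℝⁿ`: the supremum of `v > 0`
for which `|y·q + p| < ‖q‖^{−v}` for infinitely many `q ∈ ℤⁿ` and some `p ∈ ℤ`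
(as an extended nonnegative real). -/
noncomputable def omegaExp {n : ℕ} (y : Fin n → ℝ) : ℝ≥0∞ :=
  sSup {e : ℝ≥0∞ | ∃ v : ℝ, e = ENNReal.ofReal v ∧ 0 < v ∧
    {q : Fin n → ℤ | ∃ p : ℤ,
      |(∑ i, y i * q i) + (p : ℝ)| < (snormZ q) ^ (-v)}.Infinite}

/-- The Euclidean norm of the vector `g_t u_y (p, q)` in `ℝ^{n+1}`, where
`g_t = diag(e^t, e^{−t/n}, …, e^{−t/n})` and `u_y` is unipotent with first row `(1, y)`:
its first coordinate is `e^t (y·q + p)` and the remaining ones are `e^{−t/n} q_i`. -/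
noncomputable def latticeVecNorm {n : ℕ} (t : ℝ) (y : Fin n → ℝ) (p : ℤ) (q : Fin n → ℤ) : ℝ :=
  Real.sqrt ((Real.exp t * ((∑ i, y i * q i) + (p : ℝ))) ^ 2 +
    ∑ i, (Real.exp (-t / n) * (q i : ℝ)) ^ 2)

/-- The growth exponent `γ(y)`: the supremum of all `c` such that the lattice
`g_t u_y ℤ^{n+1}` contains a nonzero vector of norm less than `e^{−ct}` for
infinitely many `t ∈ ℕ`. -/
noncomputable def gammaExp {n : ℕ} (y : Fin n → ℝ) : ℝ≥0∞ :=
  sSup {e : ℝ≥0∞ | ∃ c : ℝ, e = ENNReal.ofReal c ∧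
    {t : ℕ | ∃ (p : ℤ) (q : Fin n → ℤ), ¬(p = 0 ∧ q = 0) ∧
      latticeVecNorm (t : ℝ) y p q < Real.exp (-c * t)}.Infinite}

open Filter Topology

section SupNorm

variable {n : ℕ}

lemma abs_le_snormZ (q : Fin n → ℤ) (i : Fin n) : |(q i : ℝ)| ≤ snormZ q := by
  rw [← Int.cast_abs, ← Nat.cast_natAbs]
  exact Nat.cast_le.2 (Finset.le_sup (f := fun i => (q i).natAbs) (Finset.mem_univ i))

lemma snormZ_le_iff {q : Fin n → ℤ} {B : ℝ} (hB : 0 ≤ B) :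
    snormZ q ≤ B ↔ ∀ i, |(q i : ℝ)| ≤ B := by
  rw [snormZ, ← Nat.le_floor_iff hB, Finset.sup_le_iff]
  simp only [Finset.mem_univ, true_imp_iff, Nat.le_floor_iff hB, Nat.cast_natAbs, Int.cast_abs]

lemma one_le_snormZ {q : Fin n → ℤ} (hq : q ≠ 0) : 1 ≤ snormZ q := by
  obtain ⟨i, hi⟩ := Function.ne_iff.1 hq
  refine le_trans ?_ (abs_le_snormZ q i)
  rw [← Int.cast_abs]
  exact_mod_cast Int.one_le_abs hi

lemma tendsto_snormZ_cofinite : Tendsto (snormZ : (Fin n → ℤ) → ℝ) cofinite atTop := by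
  refine tendsto_atTop.2 fun B => eventually_cofinite.2 <|
    (Set.finite_Icc (fun _ => -⌈B⌉) fun _ => ⌈B⌉).subset fun q hq => ?_
  have hqB : ∀ i, |(q i : ℝ)| ≤ ⌈B⌉ := fun i =>
    (abs_le_snormZ q i).trans ((not_le.1 hq).le.trans (Int.le_ceil B))
  have hqB' : ∀ i, |q i| ≤ ⌈B⌉ := fun i => by exact_mod_cast hqB i
  exact ⟨fun i => (abs_le.1 (hqB' i)).1, fun i => (abs_le.1 (hqB' i)).2⟩

end SupNorm

section LatticeVecNorm

variable {n : ℕ}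

lemma exp_mul_abs_le_latticeVecNorm (t : ℝ) (y : Fin n → ℝ) (p : ℤ) (q : Fin n → ℤ) :
    exp t * |(∑ i, y i * q i) + (p : ℝ)| ≤ latticeVecNorm t y p q := by
  calc exp t * |(∑ i, y i * q i) + (p : ℝ)|
      = sqrt ((exp t * ((∑ i, y i * q i) + (p : ℝ))) ^ 2) := by
        rw [sqrt_sq_eq_abs, abs_mul, abs_of_pos (exp_pos t)]
    _ ≤ latticeVecNorm t y p q :=
        sqrt_le_sqrt (le_add_of_nonneg_right (Finset.sum_nonneg fun i _ => sq_nonneg _))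

lemma exp_mul_snormZ_le_latticeVecNorm (t : ℝ) (y : Fin n → ℝ) (p : ℤ) (q : Fin n → ℤ) :
    exp (-t / n) * snormZ q ≤ latticeVecNorm t y p q := by
  rw [mul_comm, ← le_div_iff₀ (exp_pos _)]
  refine (snormZ_le_iff (div_nonneg (sqrt_nonneg _) (exp_pos _).le)).2 fun i => ?_
  rw [le_div_iff₀ (exp_pos _)]
  calc |(q i : ℝ)| * exp (-t / n) = sqrt ((exp (-t / n) * q i) ^ 2) := by
        rw [sqrt_sq_eq_abs, abs_mul, abs_of_pos (exp_pos _), mul_comm]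
    _ ≤ latticeVecNorm t y p q := by
        refine sqrt_le_sqrt (le_add_of_nonneg_of_le (sq_nonneg _) ?_)
        exact Finset.single_le_sum (f := fun j => (exp (-t / n) * q j) ^ 2)
          (fun j _ => sq_nonneg _) (Finset.mem_univ i)

lemma latticeVecNorm_le {t a : ℝ} {y : Fin n → ℝ} {p : ℤ} {q : Fin n → ℤ}
    (hr : exp t * |(∑ i, y i * q i) + (p : ℝ)| ≤ a) (hq : exp (-t / n) * snormZ q ≤ a) :
    latticeVecNorm t y p q ≤ sqrt (n + 1) * a := by
  have ha : 0 ≤ a := (mul_nonneg (exp_pos t).le (abs_nonneg _)).trans hr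
  have hsq : ∀ x : ℝ, |x| ≤ a → x ^ 2 ≤ a ^ 2 := fun x hx => sq_le_sq.2 (hx.trans (le_abs_self a))
  have hcoord : ∀ i, (exp (-t / n) * q i) ^ 2 ≤ a ^ 2 := fun i => hsq _ <| by
    rw [abs_mul, abs_of_pos (exp_pos _)]
    exact (mul_le_mul_of_nonneg_left (abs_le_snormZ q i) (exp_pos _).le).trans hq
  rw [latticeVecNorm, ← sqrt_sq ha, ← sqrt_mul (by positivity)]
  refine sqrt_le_sqrt ?_
  calc _ ≤ a ^ 2 + n * a ^ 2 := by
        refine add_le_add (hsq _ (by rwa [abs_mul, abs_of_pos (exp_pos _)])) ?_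
        simpa using Finset.sum_le_card_nsmul Finset.univ _ _ fun i _ => hcoord i
    _ = (n + 1) * a ^ 2 := by ring

end LatticeVecNorm

section Exponents

variable {n : ℕ}

def approximants (y : Fin n → ℝ) (v : ℝ) : Set (Fin n → ℤ) :=
  {q | ∃ p : ℤ, |(∑ i, y i * q i) + (p : ℝ)| < snormZ q ^ (-v)}

def shortVectorTimes (y : Fin n → ℝ) (c : ℝ) : Set ℕ :=
  {t | ∃ (p : ℤ) (q : Fin n → ℤ), ¬(p = 0 ∧ q = 0) ∧ latticeVecNorm (t : ℝ) y p q < exp (-c * t)}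

lemma ofReal_le_omegaExp {y : Fin n → ℝ} {v : ℝ} (hv : 0 < v) (h : (approximants y v).Infinite) :
    ENNReal.ofReal v ≤ omegaExp y :=
  le_sSup ⟨v, rfl, hv, h⟩

lemma ofReal_le_gammaExp {y : Fin n → ℝ} {c : ℝ} (h : (shortVectorTimes y c).Infinite) :
    ENNReal.ofReal c ≤ gammaExp y :=
  le_sSup ⟨c, rfl, h⟩

lemma mul_lt_one_of_ofReal_lt (hn : 0 < n) {c : ℝ} (h : ENNReal.ofReal c < ENNReal.ofReal (1 / n)) :
    n * c < 1 :=
  (lt_div_iff₀' (Nat.cast_pos.2 hn)).1 (ENNReal.ofReal_lt_ofReal_iff'.1 h).1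

end Exponents

section Mobius

variable {n : ℕ}

noncomputable def omegaOfGamma (n : ℕ) (c : ℝ) : ℝ := n * (1 + c) / (1 - n * c)

noncomputable def gammaOfOmega (n : ℕ) (v : ℝ) : ℝ := (v - n) / (n * (v + 1))

lemma le_omegaOfGamma_iff (hn : 0 < n) {c v : ℝ} (hc : n * c < 1) (hv : -1 < v) :
    v ≤ omegaOfGamma n c ↔ gammaOfOmega n v ≤ c := by
  have hn' : (0 : ℝ) < n := Nat.cast_pos.2 hn
  have hv' : 0 < n * (v + 1) := mul_pos hn' (by linarith)
  rw [omegaOfGamma, gammaOfOmega, le_div_iff₀ (by linarith), div_le_iff₀ hv']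
  constructor <;> intro h <;> linarith

lemma lt_omegaOfGamma_iff (hn : 0 < n) {c v : ℝ} (hc : n * c < 1) (hv : -1 < v) :
    v < omegaOfGamma n c ↔ gammaOfOmega n v < c := by
  have hn' : (0 : ℝ) < n := Nat.cast_pos.2 hn
  have hv' : 0 < n * (v + 1) := mul_pos hn' (by linarith)
  rw [omegaOfGamma, gammaOfOmega, lt_div_iff₀ (by linarith), div_lt_iff₀ hv']
  constructor <;> intro h <;> linarith

lemma omegaOfGamma_pos (hn : 0 < n) {c : ℝ} (hc0 : 0 ≤ c) (hc : n * c < 1) :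
    0 < omegaOfGamma n c :=
  div_pos (by positivity) (by linarith)

end Mobius

section Dirichlet

variable {n : ℕ}

lemma infinite_of_forall_exists_abs_sum_mul_add_lt {y : Fin n → ℝ}
    (hirr : ∀ q : Fin n → ℤ, q ≠ 0 → ∀ p : ℤ, (∑ i, y i * q i) + (p : ℝ) ≠ 0)
    {S : Set (Fin n → ℤ)}
    (h : ∀ ε > 0, ∃ q ∈ S, q ≠ 0 ∧ ∃ p : ℤ, |(∑ i, y i * q i) + (p : ℝ)| < ε) :
    S.Infinite := by
  intro hS
  have hgap : ∀ q ∈ S \ {0}, ∀ᶠ ε in 𝓝 (0 : ℝ), ∀ p : ℤ, ε ≤ |(∑ i, y i * q i) + (p : ℝ)| := by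
    rintro q ⟨-, hq⟩
    set x := ∑ i, y i * q i
    have hx : 0 < |x - round x| := by
      simpa [sub_eq_add_neg] using hirr q hq (-round x)
    filter_upwards [eventually_lt_nhds hx] with ε hε p
    calc ε ≤ |x - round x| := hε.le
      _ ≤ |x - ((-p : ℤ) : ℝ)| := round_le x (-p)
      _ = |x + p| := by push_cast; rw [sub_neg_eq_add]
  obtain ⟨ε, hε, hεpos⟩ := (((hS.sdiff).eventually_all.2 hgap).filter_mono nhdsWithin_le_nhds |>.and
    (self_mem_nhdsWithin : Set.Ioi (0 : ℝ) ∈ 𝓝[>] 0)).exists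
  obtain ⟨q, hqS, hq, p, hp⟩ := h ε hεpos
  exact not_lt.2 (hε q ⟨hqS, hq⟩ p) hp

lemma exists_ne_abs_fract_sub_lt {ι : Type*} [Fintype ι] (f : ι → ℝ) {m : ℕ} (hm0 : 0 < m)
    (hm : m < Fintype.card ι) :
    ∃ a b, a ≠ b ∧ |Int.fract (f a) - Int.fract (f b)| < 1 / m := by
  have hm' : (0 : ℝ) < m := Nat.cast_pos.2 hm0
  have hbox : ∀ a, 0 ≤ m * Int.fract (f a) := fun a => mul_nonneg hm'.le (Int.fract_nonneg _)
  let box : ι → Fin m := fun a => ⟨⌊m * Int.fract (f a)⌋₊,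
    (Nat.floor_lt (hbox a)).2 (mul_lt_of_lt_one_right hm' (Int.fract_lt_one _))⟩
  obtain ⟨a, b, hab, hbox_eq⟩ := Fintype.exists_ne_map_eq_of_card_lt box (by simpa using hm)
  refine ⟨a, b, hab, ?_⟩
  have hfloor : ⌊m * Int.fract (f a)⌋ = ⌊m * Int.fract (f b)⌋ := by
    rw [← Int.natCast_floor_eq_floor (hbox a), ← Int.natCast_floor_eq_floor (hbox b)]
    exact congrArg (fun k : Fin m => (k : ℤ)) hbox_eq
  have := Int.abs_sub_lt_one_of_floor_eq_floor hfloor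
  rwa [← mul_sub, abs_mul, abs_of_pos hm', ← lt_div_iff₀' hm'] at this

lemma exists_abs_sum_mul_add_lt (hn : 0 < n) (y : Fin n → ℝ) {Q : ℕ} (hQ : 0 < Q) :
    ∃ q : Fin n → ℤ, q ≠ 0 ∧ snormZ q ≤ Q ∧
      ∃ p : ℤ, |(∑ i, y i * q i) + (p : ℝ)| < 1 / (Q : ℝ) ^ n := by
  set s : (Fin n → Fin (Q + 1)) → ℝ := fun a => ∑ i, y i * ((a i : ℕ) : ℝ)
  obtain ⟨a, b, hab, h⟩ := exists_ne_abs_fract_sub_lt s (pow_pos hQ n)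
    (by simpa using Nat.pow_lt_pow_left (Nat.lt_succ_self Q) hn.ne')
  refine ⟨fun i => (a i : ℕ) - (b i : ℕ), fun h0 => hab ?_, ?_, ⌊s b⌋ - ⌊s a⌋, ?_⟩
  · funext i
    exact Fin.ext (by simpa [sub_eq_zero] using congrFun h0 i)
  · refine (snormZ_le_iff (Nat.cast_nonneg Q)).2 fun i => ?_
    have ha := Nat.lt_succ_iff.1 (a i).isLt
    have hb := Nat.lt_succ_iff.1 (b i).isLt
    push_cast
    rw [abs_sub_le_iff]
    constructor <;> linarith [(Nat.cast_le (α := ℝ)).2 ha, (Nat.cast_le (α := ℝ)).2 hb,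
      Nat.cast_nonneg (α := ℝ) (a i : ℕ), Nat.cast_nonneg (α := ℝ) (b i : ℕ)]
  · convert h using 2
    · simp only [s, Int.fract]
      push_cast
      simp only [mul_sub, Finset.sum_sub_distrib]
      ring
    · push_cast; rfl

lemma infinite_approximants_self (hn : 0 < n) {y : Fin n → ℝ}
    (hirr : ∀ q : Fin n → ℤ, q ≠ 0 → ∀ p : ℤ, (∑ i, y i * q i) + (p : ℝ) ≠ 0) :
    (approximants y n).Infinite := by
  refine infinite_of_forall_exists_abs_sum_mul_add_lt hirr fun ε hε => ?_
  obtain ⟨Q, hQ⟩ := exists_nat_gt ε⁻¹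
  have hQ0 : 0 < Q := Nat.cast_pos.1 ((inv_pos.2 hε).trans hQ)
  obtain ⟨q, hq, hqQ, p, hp⟩ := exists_abs_sum_mul_add_lt hn y hQ0
  have hN : 0 < snormZ q := one_pos.trans_le (one_le_snormZ hq)
  refine ⟨q, ⟨p, hp.trans_le ?_⟩, hq, p, hp.trans_le ?_⟩
  · rw [rpow_neg hN.le, Real.rpow_natCast, one_div]
    exact inv_anti₀ (pow_pos hN n) (pow_le_pow_left₀ hN.le hqQ n)
  · calc 1 / (Q : ℝ) ^ n ≤ 1 / Q :=
          one_div_le_one_div_of_le (by positivity) (le_self_pow₀ (Nat.one_le_cast.2 hQ0) hn.ne')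
      _ ≤ ε := by rw [one_div]; exact (inv_lt_of_inv_lt₀ hε hQ).le

end Dirichlet

section Transference

variable {n : ℕ} {y : Fin n → ℝ}

lemma infinite_shortVectorTimes_of_sum_mul_add_eq_zero {q : Fin n → ℤ} (hq : q ≠ 0) {p : ℤ}
    (h : (∑ i, y i * q i) + (p : ℝ) = 0) {c : ℝ} (hc : c < 1 / n) :
    (shortVectorTimes y c).Infinite := by
  have hgrow : Tendsto (fun t : ℕ => exp ((1 / n - c) * t)) atTop atTop :=
    tendsto_exp_atTop.comp (tendsto_natCast_atTop_atTop.const_mul_atTop (sub_pos.2 hc))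
  refine Nat.frequently_atTop_iff_infinite (p := (· ∈ shortVectorTimes y c)).1 <|
    ((hgrow.eventually_gt_atTop (sqrt (n + 1) * snormZ q)).mono fun t ht =>
      ⟨p, q, fun h0 => hq h0.2, ?_⟩).frequently
  calc latticeVecNorm t y p q ≤ sqrt (n + 1) * (exp (-t / n) * snormZ q) := by
        refine latticeVecNorm_le ?_ le_rfl
        rw [h, abs_zero, mul_zero]
        exact mul_nonneg (exp_pos _).le (Nat.cast_nonneg _)
    _ = exp (-t / n) * (sqrt (n + 1) * snormZ q) := by ring
    _ < exp (-t / n) * exp ((1 / n - c) * t) := mul_lt_mul_of_pos_left ht (exp_pos _)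
    _ = exp (-c * t) := by rw [← exp_add]; ring_nf

lemma sum_mul_add_ne_zero_of_gammaExp_lt (hγ : gammaExp y < ENNReal.ofReal (1 / n))
    {q : Fin n → ℤ} (hq : q ≠ 0) (p : ℤ) : (∑ i, y i * q i) + (p : ℝ) ≠ 0 := fun h => by
  obtain ⟨c, -, hγc, hc⟩ := ENNReal.lt_iff_exists_real_btwn.1 hγ
  exact not_lt.2 (ofReal_le_gammaExp (infinite_shortVectorTimes_of_sum_mul_add_eq_zero hq h
    (ENNReal.ofReal_lt_ofReal_iff'.1 hc).1)) hγc

lemma ceil_mul_log_mem_shortVectorTimes (hn : 0 < n) {α v c : ℝ} (hα : α * (n + 1) = n * (v + 1))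
    (hα0 : 0 ≤ α) (hc0 : 0 ≤ c) {q : Fin n → ℤ} (hq : q ∈ approximants y v) (hN : 1 < snormZ q)
    (hL : log (sqrt (n + 1)) + 1 + c < (v - α - c * α) * log (snormZ q)) :
    ⌈α * log (snormZ q)⌉₊ ∈ shortVectorTimes y c := by
  obtain ⟨p, hp⟩ := hq
  have hn' : (0 : ℝ) < n := Nat.cast_pos.2 hn
  have hq0 : q ≠ 0 := by rintro rfl; simp [snormZ] at hN
  set L := log (snormZ q)
  set t := ⌈α * L⌉₊
  have hL0 : 0 < L := log_pos hN
  have ht : α * L ≤ t := Nat.le_ceil _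
  have ht' : (t : ℝ) < α * L + 1 := Nat.ceil_lt_add_one (by positivity)
  have hNL : snormZ q = exp L := (exp_log (by linarith)).symm
  refine ⟨p, q, fun h => hq0 h.2, ?_⟩
  have hr : exp t * |(∑ i, y i * q i) + (p : ℝ)| ≤ exp (1 - (v - α) * L) :=
    calc exp t * |(∑ i, y i * q i) + (p : ℝ)| ≤ exp t * snormZ q ^ (-v) :=
          mul_le_mul_of_nonneg_left hp.le (exp_pos _).le
      _ = exp (t - v * L) := by rw [hNL, ← exp_mul, ← exp_add]; ring_nf
      _ ≤ exp (1 - (v - α) * L) := exp_le_exp.2 (by linarith)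
  have hcoord : exp (-t / n) * snormZ q ≤ exp (1 - (v - α) * L) := by
    have hdiv : -(t : ℝ) / n ≤ -(α * L) / n := div_le_div_of_nonneg_right (by linarith) hn'.le
    have hexp : -(α * L) / n + L = -(v - α) * L := by
      field_simp
      linear_combination -hα
    rw [hNL, ← exp_add]
    exact exp_le_exp.2 (by linarith)
  calc latticeVecNorm t y p q ≤ sqrt (n + 1) * exp (1 - (v - α) * L) := latticeVecNorm_le hr hcoord
    _ = exp (log (sqrt (n + 1)) + 1 - (v - α) * L) := by
        rw [add_sub_assoc, exp_add, Real.exp_log (by positivity)]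
    _ < exp (-c * (α * L + 1)) := exp_lt_exp.2 (by linarith)
    _ ≤ exp (-c * t) := exp_le_exp.2 (by nlinarith)

theorem infinite_shortVectorTimes_of_infinite_approximants (hn : 0 < n) {v c : ℝ} (hv : -1 < v)
    (hc0 : 0 ≤ c) (hc : c < gammaOfOmega n v) (hQ : (approximants y v).Infinite) :
    (shortVectorTimes y c).Infinite := by
  have hn' : (0 : ℝ) < n := Nat.cast_pos.2 hn
  set α : ℝ := n * (v + 1) / (n + 1)
  have hα : α * (n + 1) = n * (v + 1) := div_mul_cancel₀ _ (by positivity)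
  have hα0 : 0 < α := div_pos (mul_pos hn' (by linarith)) (by positivity)
  have hgap : 0 < v - α - c * α := by
    rw [gammaOfOmega, lt_div_iff₀ (mul_pos hn' (by linarith))] at hc
    nlinarith
  have hlog : Tendsto (fun q : Fin n → ℤ => log (snormZ q)) cofinite atTop :=
    tendsto_log_atTop.comp tendsto_snormZ_cofinite
  refine Nat.frequently_atTop_iff_infinite (p := (· ∈ shortVectorTimes y c)).1 <|
    (tendsto_nat_ceil_atTop.comp (hlog.const_mul_atTop hα0)).frequently ?_
  refine ((frequently_cofinite_iff_infinite (p := (· ∈ approximants y v))).2 hQ |>.and_eventually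
    ((tendsto_snormZ_cofinite.eventually_gt_atTop 1).and
      (hlog.eventually_gt_atTop ((log (sqrt (n + 1)) + 1 + c) / (v - α - c * α))))).mono ?_
  rintro q ⟨hq, hN, hL⟩
  exact ceil_mul_log_mem_shortVectorTimes hn hα hα0.le hc0 hq hN ((div_lt_iff₀' hgap).1 hL)

lemma ne_zero_of_latticeVecNorm_lt {c : ℝ} (hc0 : 0 ≤ c) (t : ℕ) {p : ℤ} {q : Fin n → ℤ}
    (hpq : ¬(p = 0 ∧ q = 0)) (h : latticeVecNorm t y p q < exp (-c * t)) : q ≠ 0 := by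
  rintro rfl
  have hp : (1 : ℝ) ≤ |(p : ℝ)| := by
    rw [← Int.cast_abs]; exact_mod_cast Int.one_le_abs fun hp => hpq ⟨hp, rfl⟩
  have hnorm := exp_mul_abs_le_latticeVecNorm (t : ℝ) y p 0
  simp only [Pi.zero_apply, Int.cast_zero, mul_zero, Finset.sum_const_zero, zero_add] at hnorm
  have hexp : exp (-c * t) ≤ 1 := exp_le_one_iff.2 (by nlinarith [Nat.cast_nonneg (α := ℝ) t])
  nlinarith [one_le_exp (Nat.cast_nonneg (α := ℝ) t)]

lemma abs_sum_mul_add_lt_of_latticeVecNorm_lt {t c : ℝ} {p : ℤ} {q : Fin n → ℤ}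
    (h : latticeVecNorm t y p q < exp (-c * t)) :
    |(∑ i, y i * q i) + (p : ℝ)| < exp (-(1 + c) * t) := by
  rw [← mul_lt_mul_iff_right₀ (exp_pos t), ← exp_add]
  exact (exp_mul_abs_le_latticeVecNorm t y p q).trans_lt (h.trans_eq (by ring_nf))

lemma snormZ_lt_of_latticeVecNorm_lt {t c : ℝ} {p : ℤ} {q : Fin n → ℤ}
    (h : latticeVecNorm t y p q < exp (-c * t)) : snormZ q < exp ((1 / n - c) * t) := by
  rw [← mul_lt_mul_iff_right₀ (exp_pos (-t / n)), ← exp_add]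
  exact (exp_mul_snormZ_le_latticeVecNorm t y p q).trans_lt (h.trans_eq (by ring_nf))

lemma mem_approximants_of_latticeVecNorm_lt (hn : 0 < n) {c : ℝ} (hc0 : 0 ≤ c) (hc : n * c < 1)
    {t : ℝ} {p : ℤ} {q : Fin n → ℤ} (hq : q ≠ 0) (h : latticeVecNorm t y p q < exp (-c * t)) :
    q ∈ approximants y (omegaOfGamma n c) := by
  have hN : 0 < snormZ q := one_pos.trans_le (one_le_snormZ hq)
  refine ⟨p, (abs_sum_mul_add_lt_of_latticeVecNorm_lt h).trans_le ?_⟩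
  calc exp (-(1 + c) * t) = exp ((1 / n - c) * t) ^ (-omegaOfGamma n c) := by
        rw [← exp_mul, omegaOfGamma]
        congr 1
        have : (1 : ℝ) - c * n ≠ 0 := by linarith
        field_simp
    _ ≤ snormZ q ^ (-omegaOfGamma n c) :=
        rpow_le_rpow_of_nonpos hN (snormZ_lt_of_latticeVecNorm_lt h).le
          (neg_nonpos.2 (omegaOfGamma_pos hn hc0 hc).le)

theorem infinite_approximants_of_infinite_shortVectorTimes (hn : 0 < n)
    (hirr : ∀ q : Fin n → ℤ, q ≠ 0 → ∀ p : ℤ, (∑ i, y i * q i) + (p : ℝ) ≠ 0)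
    {c : ℝ} (hc0 : 0 ≤ c) (hc : n * c < 1) (hT : (shortVectorTimes y c).Infinite) :
    (approximants y (omegaOfGamma n c)).Infinite := by
  refine infinite_of_forall_exists_abs_sum_mul_add_lt hirr fun ε hε => ?_
  have hdecay : Tendsto (fun t : ℕ => exp (-(1 + c) * t)) atTop (𝓝 0) :=
    tendsto_exp_atBot.comp (tendsto_natCast_atTop_atTop.const_mul_atTop_of_neg (by linarith))
  obtain ⟨T, hT'⟩ := eventually_atTop.1 (hdecay.eventually (eventually_lt_nhds hε))
  obtain ⟨t, ⟨p, q, hpq, hlt⟩, htT⟩ := hT.exists_gt T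
  have hq := ne_zero_of_latticeVecNorm_lt hc0 t hpq hlt
  exact ⟨q, mem_approximants_of_latticeVecNorm_lt hn hc0 hc hq hlt, hq, p,
    (abs_sum_mul_add_lt_of_latticeVecNorm_lt hlt).trans (hT' t htT.le)⟩

end Transference

section Bounds

variable {n : ℕ} {y : Fin n → ℝ}

theorem omegaExp_le_of_gammaExp_le (hn : 0 < n) {c : ℝ} (hc0 : 0 ≤ c) (hc : n * c < 1)
    (hγ : gammaExp y ≤ ENNReal.ofReal c) : omegaExp y ≤ ENNReal.ofReal (omegaOfGamma n c) := by
  refine sSup_le ?_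
  rintro _ ⟨v, rfl, hv, hQ⟩
  refine ENNReal.ofReal_le_ofReal ((le_omegaOfGamma_iff hn hc (by linarith)).2 ?_)
  refine le_of_forall_lt_imp_le_of_dense fun c' hc' => ?_
  rcases lt_or_ge c' 0 with hneg | hnonneg
  · linarith
  · exact (ENNReal.ofReal_le_ofReal_iff hc0).1 <| (ofReal_le_gammaExp <|
      infinite_shortVectorTimes_of_infinite_approximants hn (by linarith) hnonneg hc' hQ).trans hγ

theorem ofReal_le_omegaExp_of_le_gammaExp (hn : 0 < n) (hγ : gammaExp y < ENNReal.ofReal (1 / n))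
    {c : ℝ} (hc : ENNReal.ofReal c ≤ gammaExp y) :
    ENNReal.ofReal (omegaOfGamma n c) ≤ omegaExp y := by
  have hirr : ∀ q : Fin n → ℤ, q ≠ 0 → ∀ p : ℤ, (∑ i, y i * q i) + (p : ℝ) ≠ 0 :=
    fun q hq p => sum_mul_add_ne_zero_of_gammaExp_lt hγ hq p
  rcases eq_top_or_lt_top (omegaExp y) with htop | hfin
  · simp [htop]
  rw [ENNReal.ofReal_le_iff_le_toReal hfin.ne]
  refine le_of_forall_lt_imp_le_of_dense fun v hv => ?_
  rcases le_or_gt v n with hvn | hvn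
  · exact hvn.trans <| (ENNReal.ofReal_le_iff_le_toReal hfin.ne).1 <|
      ofReal_le_omegaExp (Nat.cast_pos.2 hn) (infinite_approximants_self hn hirr)
  have hg : gammaOfOmega n v < c :=
    (lt_omegaOfGamma_iff hn (mul_lt_one_of_ofReal_lt hn (hc.trans_lt hγ))
      (by linarith [Nat.cast_nonneg (α := ℝ) n])).1 hv
  have hg0 : 0 < gammaOfOmega n v :=
    div_pos (by linarith) (mul_pos (Nat.cast_pos.2 hn) (by linarith [Nat.cast_nonneg (α := ℝ) n]))
  obtain ⟨_, ⟨c', rfl, hT⟩, hlt⟩ :=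
    lt_sSup_iff.1 (((ENNReal.ofReal_lt_ofReal_iff (hg0.trans hg)).2 hg).trans_le hc)
  obtain ⟨hgc', hc'0⟩ := ENNReal.ofReal_lt_ofReal_iff'.1 hlt
  have hc'n := mul_lt_one_of_ofReal_lt hn ((ofReal_le_gammaExp hT).trans_lt hγ)
  refine ((lt_omegaOfGamma_iff hn hc'n (by linarith)).2 hgc').le.trans ?_
  rw [← ENNReal.ofReal_le_iff_le_toReal hfin.ne]
  exact ofReal_le_omegaExp (omegaOfGamma_pos hn hc'0.le hc'n)
    (infinite_approximants_of_infinite_shortVectorTimes hn hirr hc'0.le hc'n hT)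

end Bounds

/-- `ω(y) = n (1 + γ(y)) / (1 − n γ(y))` whenever `γ(y) < 1/n`. -/
theorem omega_eq_of_gamma {n : ℕ} (hn : 0 < n) (y : Fin n → ℝ)
    (hγ : gammaExp y < ENNReal.ofReal (1 / n)) :
    omegaExp y =
      ENNReal.ofReal ((n * (1 + (gammaExp y).toReal)) / (1 - n * (gammaExp y).toReal)) := by
  have hγ_eq : ENNReal.ofReal (gammaExp y).toReal = gammaExp y := ENNReal.ofReal_toReal hγ.ne_top
  have hγn : n * (gammaExp y).toReal < 1 := mul_lt_one_of_ofReal_lt hn (hγ_eq.symm ▸ hγ)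
  exact le_antisymm (omegaExp_le_of_gammaExp_le hn ENNReal.toReal_nonneg hγn hγ_eq.ge)
    (ofReal_le_omegaExp_of_le_gammaExp hn hγ hγ_eq.le)
end

section
/- Let V = ℝ^{n+1} with standard basis e₀, e₁, ..., eₙ, and V₀ = span(e₁,...,eₙ). For y ∈ ℝⁿ let u_y ∈ SL_{n+1}(ℝ) fix e₀ and send e_i to e_i + y_i e₀ for i ≥ 1. For w ∈ Λʲ(V) define c(w)_i = Σ_{J ⊆ {1,...,n}, #J = j−1} ⟨e_i ∧ e_J, w⟩ e_J for i = 0,...,n, and let π: Λʲ(V) → Λʲ(V₀) be the orthogonal projection. Then for g_t = diag(e^t, e^{−t/n},...,e^{−t/n}) acting on Λʲ(V), one has g_t u_y w = e^{−jt/n} π(w) + e^{(n+1−j)t/n} e₀ ∧ (Σ_{i=0}^n y_i c(w)_i), where y₀ = 1. -/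
open Finset Real

variable {n : ℕ}

/-- The coefficient `⟨e_i ∧ e_J, w⟩` of an element `w` of the exterior algebra of `ℝ^{n+1}`,
written in coordinates with respect to the orthonormal basis `{e_I}`. -/
def wedgeCoeff (i : Fin (n + 1)) (J : Finset (Fin (n + 1))) (w : Finset (Fin (n + 1)) → ℝ) : ℝ :=
  if i ∈ J then 0 else (-1 : ℝ) ^ (J.filter (· < i)).card * w (insert i J)

/-- The minor of `g` with rows `I` and columns `K` (listed in increasing order):
the entry of the compound matrix giving the action of `g` on the exterior power. -/
def minor (g : Matrix (Fin (n + 1)) (Fin (n + 1)) ℝ) (I K : Finset (Fin (n + 1))) : ℝ :=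
  Matrix.det (Matrix.of fun a b : Fin I.card =>
    g ((I.sort (· ≤ ·)).getD a 0) ((K.sort (· ≤ ·)).getD b 0))

/-- The multiplicative (compound-matrix) action of `g` on the exterior algebra of `ℝ^{n+1}`,
in coordinates: `(g·w)(I) = ∑_K det(g_{I,K}) w(K)` over `K` of the same cardinality. -/
def extAct (g : Matrix (Fin (n + 1)) (Fin (n + 1)) ℝ) (w : Finset (Fin (n + 1)) → ℝ) :
    Finset (Fin (n + 1)) → ℝ :=
  fun I => ∑ K ∈ Finset.univ.powersetCard I.card, minor g I K * w K

/-- The orthogonal projection `π : Λ(V) → Λ(V₀)`, `V₀ = span(e₁,…,eₙ)`, in coordinates. -/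
def piProj (w : Finset (Fin (n + 1)) → ℝ) : Finset (Fin (n + 1)) → ℝ :=
  fun I => if (0 : Fin (n + 1)) ∈ I then 0 else w I

/-- Wedging with `e₀` of an element of `Λ(V₀)`, in coordinates. -/
def e0Wedge (u : Finset (Fin (n + 1)) → ℝ) : Finset (Fin (n + 1)) → ℝ :=
  fun I => if (0 : Fin (n + 1)) ∈ I then u (I.erase 0) else 0

/-- The `J`-coordinate of `c(w)_i = Σ_{J ⊆ {1,…,n}, #J = j−1} ⟨e_i ∧ e_J, w⟩ e_J`. -/
def cComp (w : Finset (Fin (n + 1)) → ℝ) (i : Fin (n + 1)) (J : Finset (Fin (n + 1))) : ℝ :=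
  if (0 : Fin (n + 1)) ∈ J then 0 else wedgeCoeff i J w

/-- The unipotent matrix `u_y` fixing `e₀` and sending `e_i ↦ e_i + y_i e₀` for `i ≥ 1`. -/
def uMat (y : Fin n → ℝ) : Matrix (Fin (n + 1)) (Fin (n + 1)) ℝ :=
  Matrix.of fun i k =>
    if i = k then 1
    else if i = 0 then (if h : (k : ℕ) = 0 then 0 else y ⟨(k : ℕ) - 1, by omega⟩) else 0

/-- The diagonal matrix `g_t = diag(e^t, e^{−t/n}, …, e^{−t/n})`. -/
noncomputable def gMat (n : ℕ) (t : ℝ) : Matrix (Fin (n + 1)) (Fin (n + 1)) ℝ :=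
  Matrix.of fun i k =>
    if i = k then (if i = 0 then Real.exp t else Real.exp (-t / n)) else 0

/-- `(1, y)` as a function on `Fin (n+1)`, i.e. `y₀ = 1`. -/
def ytil (y : Fin n → ℝ) : Fin (n + 1) → ℝ :=
  fun k => if h : (k : ℕ) = 0 then 1 else y ⟨(k : ℕ) - 1, by omega⟩

/-!
The first row of `g_t u_y` is `e^t (1, y)` and its row `i ≠ 0` is `e^{-t/n} e_i`. So the minor
with rows `I` and columns `K` (of equal size) vanishes unless `I \ {0} ⊆ K`. If `0 ∉ I` only
`K = I` survives, with minor `e^{-|I|t/n}`. If `I = {0} ∪ J`, only `K = {k} ∪ J` with `k ∉ J`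
survive, and Laplace expansion along the first row gives the minor
`(-1)^{#{x ∈ J | x < k}} e^t y_k e^{-|J|t/n}`, whose sign is the sign in `⟨e_k ∧ e_J, w⟩`.
-/

open Matrix

theorem Finset.card_filter_lt_orderEmbOfFin {α : Type*} [LinearOrder α] (s : Finset α) {m : ℕ}
    (h : s.card = m) (i : Fin m) : #{x ∈ s | x < s.orderEmbOfFin h i} = i := by
  have hfilter :
      {x ∈ s | x < s.orderEmbOfFin h i} = (Iio i).map (s.orderEmbOfFin h).toEmbedding := by
    ext x
    simp only [mem_filter, mem_map, mem_Iio]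
    constructor
    · rintro ⟨hx, hlt⟩
      obtain ⟨a, rfl⟩ : x ∈ Set.range (s.orderEmbOfFin h) := by simpa using hx
      exact ⟨a, (s.orderEmbOfFin h).lt_iff_lt.1 hlt, rfl⟩
    · rintro ⟨a, ha, rfl⟩
      exact ⟨s.orderEmbOfFin_mem h a, (s.orderEmbOfFin h).lt_iff_lt.2 ha⟩
  rw [hfilter, card_map, Fin.card_Iio]

theorem Finset.sum_powersetCard_card_add_one {α β : Type*} [Fintype α] [DecidableEq α]
    [AddCommMonoid β] (J : Finset α) (f : Finset α → β)
    (hf : ∀ K : Finset α, K.card = J.card + 1 → ¬ J ⊆ K → f K = 0) :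
    ∑ K ∈ univ.powersetCard (J.card + 1), f K = ∑ k ∈ Jᶜ, f (insert k J) := by
  rw [← sum_image J.insert_inj_on']
  refine (sum_subset (fun K hK => ?_) fun K hK hKJ => hf K ?_ fun hJK => hKJ ?_).symm
  · obtain ⟨k, hk, rfl⟩ := mem_image.1 hK
    simp [card_insert_of_notMem (mem_compl.1 hk)]
  · exact (mem_powersetCard.1 hK).2
  · obtain ⟨k, hk, hkJ⟩ := exists_eq_insert_iff.2 ⟨hJK, (mem_powersetCard.1 hK).2.symm⟩
    exact mem_image.2 ⟨k, mem_compl.2 hk, hkJ⟩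

theorem minor_eq_det_submatrix (g : Matrix (Fin (n + 1)) (Fin (n + 1)) ℝ)
    {I K : Finset (Fin (n + 1))} {m : ℕ} (hI : I.card = m) (hK : K.card = m) :
    minor g I K = (g.submatrix (I.orderEmbOfFin hI) (K.orderEmbOfFin hK)).det := by
  subst hI
  unfold minor
  congr 1
  ext a b
  simp [orderEmbOfFin_apply, hK]

section Minor

variable {g : Matrix (Fin (n + 1)) (Fin (n + 1)) ℝ}

theorem minor_eq_zero_of_row_eq_single {I K : Finset (Fin (n + 1))} (hK : K.card = I.card)
    {x : Fin (n + 1)} {c : ℝ} (hx : g x = Pi.single x c) (hxI : x ∈ I) (hxK : x ∉ K) :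
    minor g I K = 0 := by
  rw [minor_eq_det_submatrix g rfl hK]
  obtain ⟨a, rfl⟩ : x ∈ Set.range (I.orderEmbOfFin rfl) := by simpa using hxI
  refine det_eq_zero_of_row_eq_zero a fun b => ?_
  rw [submatrix_apply, hx, Pi.single_apply, if_neg]
  exact fun h => hxK (h ▸ K.orderEmbOfFin_mem hK b)

theorem det_submatrix_orderEmbOfFin_self (I : Finset (Fin (n + 1))) {m : ℕ} (hI : I.card = m)
    {c : ℝ} (h : ∀ i ∈ I, g i = Pi.single i c) :
    (g.submatrix (I.orderEmbOfFin hI) (I.orderEmbOfFin hI)).det = c ^ m := by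
  have hdiag : g.submatrix (I.orderEmbOfFin hI) (I.orderEmbOfFin hI) = diagonal fun _ => c := by
    ext a b
    simp [h _ (I.orderEmbOfFin_mem hI a), Pi.single_apply, diagonal_apply, eq_comm]
  rw [hdiag, det_diagonal, prod_const, card_univ, Fintype.card_fin]

theorem minor_self_of_row_eq_single {I : Finset (Fin (n + 1))} {c : ℝ}
    (h : ∀ i ∈ I, g i = Pi.single i c) : minor g I I = c ^ I.card := by
  rw [minor_eq_det_submatrix g rfl rfl, det_submatrix_orderEmbOfFin_self I rfl h]

theorem minor_insert_zero_insert {J : Finset (Fin (n + 1))} (hJ : 0 ∉ J) {k : Fin (n + 1)}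
    (hk : k ∉ J) {c : ℝ} (h : ∀ i ∈ J, g i = Pi.single i c) :
    minor g (insert 0 J) (insert k J) = (-1) ^ #{x ∈ J | x < k} * g 0 k * c ^ J.card := by
  have hI : (insert 0 J).card = J.card + 1 := card_insert_of_notMem hJ
  have hK : (insert k J).card = J.card + 1 := card_insert_of_notMem hk
  set eI := (insert 0 J).orderEmbOfFin hI
  set eK := (insert k J).orderEmbOfFin hK
  set eJ := J.orderEmbOfFin rfl
  have heI_zero : eI 0 = 0 := by
    obtain ⟨a, ha⟩ : (0 : Fin (n + 1)) ∈ Set.range eI := by simp [eI]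
    exact le_antisymm ((eI.monotone (Fin.zero_le a)).trans_eq ha) (Fin.zero_le _)
  have hrows : eI ∘ Fin.succ = eJ := by
    refine orderEmbOfFin_unique _ (fun a => ?_) (eI.strictMono.comp (Fin.strictMono_succ))
    have hne : eI a.succ ≠ 0 := heI_zero ▸ (eI.strictMono (Fin.succ_pos a)).ne'
    exact (mem_insert.1 (orderEmbOfFin_mem _ hI _)).resolve_left hne
  obtain ⟨p, hp⟩ : k ∈ Set.range eK := by simp [eK]
  have hcols : eK ∘ p.succAbove = eJ := by
    refine orderEmbOfFin_unique _ (fun b => ?_) (eK.strictMono.comp (Fin.strictMono_succAbove p))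
    have hne : eK (p.succAbove b) ≠ k := hp ▸ eK.injective.ne (Fin.succAbove_ne p b)
    exact (mem_insert.1 (orderEmbOfFin_mem _ hK _)).resolve_left hne
  have hsign : #{x ∈ J | x < k} = p := by
    have hcard := card_filter_lt_orderEmbOfFin (insert k J) hK p
    rwa [show (insert k J).orderEmbOfFin hK p = k from hp, filter_insert, if_neg (lt_irrefl k)]
      at hcard
  rw [minor_eq_det_submatrix g hI hK, det_succ_row_zero, sum_eq_single p]
  · rw [submatrix_submatrix, hrows, hcols, det_submatrix_orderEmbOfFin_self J rfl h,
      submatrix_apply, heI_zero, hp, hsign]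
  · intro b _ hbp
    have hbJ : eK b ∈ J :=
      (mem_insert.1 (orderEmbOfFin_mem _ hK _)).resolve_left fun hbk =>
        hbp (eK.injective (hbk.trans hp.symm))
    obtain ⟨a, ha⟩ : eK b ∈ Set.range eJ := by simpa [eJ] using hbJ
    refine mul_eq_zero_of_right _ (det_eq_zero_of_row_eq_zero a fun b' => ?_)
    have hrow : eI a.succ = eK b := (congrFun hrows a).trans ha
    rw [submatrix_apply, submatrix_apply, hrow, h _ hbJ, Pi.single_apply, if_neg]
    exact eK.injective.ne (Fin.succAbove_ne b b')
  · exact fun hp => absurd (mem_univ p) hp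

end Minor

theorem gMat_eq_diagonal (t : ℝ) :
    gMat n t = diagonal fun i => if i = 0 then exp t else exp (-t / n) := by
  ext i k
  by_cases hik : i = k <;> simp [gMat, hik]

theorem uMat_zero (y : Fin n → ℝ) : uMat y 0 = ytil y := by
  ext k
  by_cases hk : (k : ℕ) = 0
  · obtain rfl : k = 0 := Fin.ext hk
    simp [uMat, ytil]
  · simp only [uMat, ytil, of_apply, if_true, dif_neg hk]
    rw [if_neg fun h => hk (by rw [← h]; rfl)]

theorem uMat_of_ne_zero (y : Fin n → ℝ) {i : Fin (n + 1)} (hi : i ≠ 0) :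
    uMat y i = Pi.single i 1 := by
  ext k
  by_cases hik : i = k
  · subst hik
    simp [uMat]
  · simp [uMat, hi, hik, Ne.symm hik]

theorem gMat_mul_uMat_apply_zero (t : ℝ) (y : Fin n → ℝ) (k : Fin (n + 1)) :
    (gMat n t * uMat y) 0 k = exp t * ytil y k := by
  rw [gMat_eq_diagonal, diagonal_mul, uMat_zero, if_pos rfl]

theorem gMat_mul_uMat_of_ne_zero (t : ℝ) (y : Fin n → ℝ) {i : Fin (n + 1)} (hi : i ≠ 0) :
    (gMat n t * uMat y) i = Pi.single i (exp (-t / n)) := by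
  ext k
  rw [gMat_eq_diagonal, diagonal_mul, uMat_of_ne_zero y hi, if_neg hi, Pi.single_apply,
    Pi.single_apply]
  simp

theorem sum_mul_cComp {w : Finset (Fin (n + 1)) → ℝ} {J : Finset (Fin (n + 1))} (hJ : 0 ∉ J)
    (a : Fin (n + 1) → ℝ) :
    ∑ i, a i * cComp w i J =
      ∑ k ∈ Jᶜ, a k * ((-1) ^ #{x ∈ J | x < k} * w (insert k J)) := by
  rw [← sum_compl_add_sum J, sum_eq_zero (s := J) fun i hi => by simp [cComp, wedgeCoeff, hJ, hi],
    add_zero]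
  refine sum_congr rfl fun k hk => ?_
  rw [cComp, if_neg hJ, wedgeCoeff, if_neg (mem_compl.1 hk)]

theorem exp_mul_exp_neg_div_pow (hn : (n : ℝ) ≠ 0) (t : ℝ) (m : ℕ) :
    exp t * exp (-t / n) ^ m = exp ((n + 1 - (m + 1 : ℕ)) * t / n) := by
  rw [← exp_nat_mul, ← exp_add]
  congr 1
  push_cast
  field_simp
  ring

section Action

variable (t : ℝ) (y : Fin n → ℝ)

theorem minor_gMat_mul_uMat_eq_zero {I K : Finset (Fin (n + 1))} (hK : K.card = I.card)
    (hIK : ¬ I.erase 0 ⊆ K) : minor (gMat n t * uMat y) I K = 0 := by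
  obtain ⟨x, hx, hxK⟩ := not_subset.1 hIK
  exact minor_eq_zero_of_row_eq_single hK (gMat_mul_uMat_of_ne_zero t y (ne_of_mem_erase hx))
    (mem_of_mem_erase hx) hxK

theorem extAct_gMat_mul_uMat_of_zero_notMem (w : Finset (Fin (n + 1)) → ℝ)
    {I : Finset (Fin (n + 1))} (hI : 0 ∉ I) :
    extAct (gMat n t * uMat y) w I = exp (-t / n) ^ I.card * w I := by
  rw [extAct, sum_eq_single_of_mem I (mem_powersetCard.2 ⟨subset_univ I, rfl⟩)
      fun K hK hKI => ?_,
    minor_self_of_row_eq_single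
      fun i hi => gMat_mul_uMat_of_ne_zero t y (ne_of_mem_of_not_mem hi hI)]
  refine mul_eq_zero_of_left (minor_gMat_mul_uMat_eq_zero t y (mem_powersetCard.1 hK).2
    fun hIK => hKI ?_) _
  rw [erase_eq_of_notMem hI] at hIK
  exact (eq_of_subset_of_card_le hIK (mem_powersetCard.1 hK).2.le).symm

theorem extAct_gMat_mul_uMat_insert_zero (w : Finset (Fin (n + 1)) → ℝ)
    {J : Finset (Fin (n + 1))} (hJ : 0 ∉ J) :
    extAct (gMat n t * uMat y) w (insert 0 J) =
      exp t * exp (-t / n) ^ J.card * ∑ i, ytil y i * cComp w i J := by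
  rw [extAct, card_insert_of_notMem hJ, sum_mul_cComp hJ, mul_sum,
    sum_powersetCard_card_add_one J _ fun K hK hJK => by
      rw [minor_gMat_mul_uMat_eq_zero t y (by rwa [card_insert_of_notMem hJ])
        (by rwa [erase_insert hJ]), zero_mul]]
  refine sum_congr rfl fun k hk => ?_
  rw [minor_insert_zero_insert hJ (mem_compl.1 hk)
    fun i hi => gMat_mul_uMat_of_ne_zero t y (ne_of_mem_of_not_mem hi hJ),
    gMat_mul_uMat_apply_zero]
  ring

end Action

theorem gt_uy_on_exterior_general (hn : 1 ≤ n) (j : ℕ)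
    (y : Fin n → ℝ) (t : ℝ) (w : Finset (Fin (n + 1)) → ℝ)
    (hw : ∀ I : Finset (Fin (n + 1)), I.card ≠ j → w I = 0) :
    extAct (gMat n t * uMat y) w = fun I =>
      Real.exp (-(j : ℝ) * t / n) * piProj w I +
        Real.exp (((n : ℝ) + 1 - j) * t / n) *
          e0Wedge (fun J => ∑ i, ytil y i * cComp w i J) I := by
  funext I
  by_cases h0I : 0 ∈ I
  · obtain ⟨J, hJ, rfl⟩ : ∃ J, 0 ∉ J ∧ insert 0 J = I :=
      ⟨I.erase 0, notMem_erase 0 I, insert_erase h0I⟩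
    rw [extAct_gMat_mul_uMat_insert_zero t y w hJ, piProj, e0Wedge, if_pos h0I, if_pos h0I,
      erase_insert hJ, mul_zero, zero_add]
    by_cases hj : J.card + 1 = j
    · rw [← hj, exp_mul_exp_neg_div_pow (Nat.cast_ne_zero.2 (by omega))]
    · have hc : ∀ i, cComp w i J = 0 := fun i => by
        unfold cComp wedgeCoeff
        split_ifs with _ hi
        · rfl
        · rfl
        · rw [hw _ (by rwa [card_insert_of_notMem hi]), mul_zero]
      simp [hc]
  · rw [extAct_gMat_mul_uMat_of_zero_notMem t y w h0I, piProj, e0Wedge, if_neg h0I, if_neg h0I,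
      mul_zero, add_zero]
    by_cases hj : I.card = j
    · rw [← hj, ← exp_nat_mul]
      ring_nf
    · rw [hw I hj, mul_zero, mul_zero]

/-- `g_t u_y w = e^{−jt/n} π(w) + e^{(n+1−j)t/n} e₀ ∧ (Σ_{i=0}^n y_i c(w)_i)` for
`w ∈ Λʲ(ℝ^{n+1})`, where `y₀ = 1`. -/
theorem gt_uy_on_exterior (hn : 1 ≤ n) (j : ℕ) (hj1 : 1 ≤ j) (hjn : j ≤ n)
    (y : Fin n → ℝ) (t : ℝ) (w : Finset (Fin (n + 1)) → ℝ)
    (hw : ∀ I : Finset (Fin (n + 1)), I.card ≠ j → w I = 0) :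
    extAct (gMat n t * uMat y) w = fun I =>
      Real.exp (-(j : ℝ) * t / n) * piProj w I +
        Real.exp (((n : ℝ) + 1 - j) * t / n) *
          e0Wedge (fun J => ∑ i, ytil y i * cComp w i J) I :=
  gt_uy_on_exterior_general hn j y t w hw
end

section
/- Cassels' transference inequality: for a row vector y ∈ ℝⁿ with finite exponents, the simultaneous approximation exponent σ(y) and the linear form exponent ω(y) satisfy (ω(y) − n + 1)/n ≥ σ(y) ≥ 1/(n − 1 + n/ω(y)). In particular, ω(y) = n if and only if σ(y) = 1/n. -/
open Finset Real

def omegaSet {n : ℕ} (y : Fin n → ℝ) : Set ℝ :=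
  {v : ℝ | 0 < v ∧ {q : Fin n → ℤ | ∃ p : ℤ,
    |(∑ i, y i * q i) + (p : ℝ)| < (snormZ q) ^ (-v)}.Infinite}

def sigmaSet {n : ℕ} (y : Fin n → ℝ) : Set ℝ :=
  {v : ℝ | 0 < v ∧ {q : ℤ | ∃ p : Fin n → ℤ,
    ∀ i, |(q : ℝ) * y i + (p i : ℝ)| < |(q : ℝ)| ^ (-v)}.Infinite}

namespace CasselsAux

/-- natural sup norm -/
def snn {n : ℕ} (q : Fin n → ℤ) : ℕ := Finset.univ.sup fun i => (q i).natAbs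

lemma snormZ_eq {n : ℕ} (q : Fin n → ℤ) : snormZ q = (snn q : ℝ) := rfl

lemma natAbs_le_snn {n : ℕ} (q : Fin n → ℤ) (i : Fin n) : (q i).natAbs ≤ snn q :=
  Finset.le_sup (f := fun i => (q i).natAbs) (Finset.mem_univ i)

lemma abs_le_snormZ {n : ℕ} (q : Fin n → ℤ) (i : Fin n) : |(q i : ℝ)| ≤ snormZ q := by
  rw [snormZ_eq]
  rw [show |(q i : ℝ)| = ((q i).natAbs : ℝ) by push_cast [Nat.cast_natAbs]; ring]
  exact_mod_cast natAbs_le_snn q i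

lemma one_le_snn {n : ℕ} {q : Fin n → ℤ} (hq : q ≠ 0) : 1 ≤ snn q := by
  obtain ⟨i, hi⟩ : ∃ i, q i ≠ 0 := by
    by_contra h; push_neg at h; exact hq (funext h)
  calc 1 ≤ (q i).natAbs := by omega
    _ ≤ snn q := natAbs_le_snn q i

lemma one_le_snormZ {n : ℕ} {q : Fin n → ℤ} (hq : q ≠ 0) : 1 ≤ snormZ q := by
  rw [snormZ_eq]; exact_mod_cast one_le_snn hq

lemma snn_le_iff {n : ℕ} (q : Fin n → ℤ) (N : ℕ) : snn q ≤ N ↔ ∀ i, (q i).natAbs ≤ N := by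
  simp [snn, Finset.sup_le_iff]


/-- Generic machine: produce infinitude of a projection set from arbitrarily good pairs. -/
lemma infinite_proj {γ δ : Type*} (S : Set δ) (P : γ → Prop) (val : γ → ℝ) (proj : γ → δ)
    (h1 : ∀ ε : ℝ, 0 < ε → ∃ c, P c ∧ 0 < val c ∧ val c < ε)
    (h2 : ∀ c d, P c → P d → val c < 1/2 → val d < 1/2 → proj c = proj d → c = d)
    (h3 : ∀ c, P c → proj c ∈ S) : S.Infinite := by
  have hne : Nonempty γ := ⟨(h1 1 one_pos).choose⟩
  classical
  set F : ℝ → γ := fun e => if h : 0 < e then (h1 e h).choose else Classical.arbitrary γ with hF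
  have hFspec : ∀ e : ℝ, 0 < e → P (F e) ∧ 0 < val (F e) ∧ val (F e) < e := by
    intro e he
    simp only [hF, dif_pos he]
    exact (h1 e he).choose_spec
  set g : ℕ → γ := fun k => Nat.rec (F (1/2)) (fun _ prev => F (min (1/2) (val prev))) k with hg
  have hg0 : g 0 = F (1/2) := rfl
  have hgs : ∀ k, g (k+1) = F (min (1/2) (val (g k))) := fun k => rfl
  have inv : ∀ k, P (g k) ∧ 0 < val (g k) ∧ val (g k) < 1/2 := by
    intro k
    induction k with
    | zero => exact hFspec (1/2) (by norm_num)
    | succ k ih =>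
      have hmin : (0:ℝ) < min (1/2) (val (g k)) := lt_min (by norm_num) ih.2.1
      obtain ⟨h1', h2', h3'⟩ := hFspec _ hmin
      rw [← hgs k] at h1' h2' h3'
      exact ⟨h1', h2', h3'.trans_le (min_le_left _ _)⟩
  have hdec : ∀ k, val (g (k+1)) < val (g k) := by
    intro k
    have hmin : (0:ℝ) < min (1/2) (val (g k)) := lt_min (by norm_num) (inv k).2.1
    have := (hFspec _ hmin).2.2
    rw [← hgs k] at this
    exact this.trans_le (min_le_right _ _)
  have hanti : StrictAnti (fun k => val (g k)) := strictAnti_nat_of_succ_lt hdec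
  have hinj : Function.Injective (fun k => proj (g k)) := by
    intro k l hkl
    by_contra hne'
    have : g k = g l := h2 _ _ (inv k).1 (inv l).1 (inv k).2.2 (inv l).2.2 hkl
    have : val (g k) = val (g l) := by rw [this]
    exact hne' (hanti.injective this)
  exact Set.infinite_of_injective_forall_mem hinj (fun k => h3 _ (inv k).1)

/-- Infinite sets of integer vectors have unbounded sup norm. -/
lemma exists_snn_gt {n : ℕ} {S : Set (Fin n → ℤ)} (hS : S.Infinite) (B : ℕ) :
    ∃ q ∈ S, B < snn q := by
  by_contra h
  push_neg at h
  apply hS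
  have : S ⊆ Set.pi Set.univ (fun _ : Fin n => Set.Icc (-(B:ℤ)) (B:ℤ)) := by
    intro q hq i _
    have := (snn_le_iff q B).mp (h q hq) i
    simp only [Set.mem_Icc]
    omega
  exact Set.Finite.subset (Set.Finite.pi (fun _ => Set.finite_Icc _ _)) this

lemma exists_natAbs_gt {S : Set ℤ} (hS : S.Infinite) (B : ℕ) :
    ∃ q ∈ S, B < q.natAbs := by
  by_contra h
  push_neg at h
  apply hS
  have : S ⊆ Set.Icc (-(B:ℤ)) (B:ℤ) := by
    intro q hq
    have := h q hq
    simp only [Set.mem_Icc]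
    omega
  exact Set.Finite.subset (Set.finite_Icc _ _) this


lemma not_bddAbove_of_forall_pos {S : Set ℝ} (h : ∀ v : ℝ, 0 < v → v ∈ S) :
    ¬ BddAbove S := by
  rintro ⟨c, hc⟩
  have h1 := hc (h (max c 1 + 1) (by positivity))
  have h2 : (1:ℝ) ≤ max c 1 := le_max_right _ _
  have h3 : c ≤ max c 1 := le_max_left _ _
  linarith

lemma omega_unbounded_of_exact {n : ℕ} {y : Fin n → ℝ} {a : Fin n → ℤ} {b : ℤ}
    (ha : a ≠ 0) (h : (∑ i, y i * a i) + (b:ℝ) = 0) : ¬ BddAbove (omegaSet y) := by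
  apply not_bddAbove_of_forall_pos
  intro v hv
  refine ⟨hv, ?_⟩
  have key : ∀ k : ℕ, (fun i => ((k:ℤ)+1) * a i) ∈
      {q : Fin n → ℤ | ∃ p : ℤ, |(∑ i, y i * q i) + (p : ℝ)| < (snormZ q) ^ (-v)} := by
    intro k
    refine ⟨((k:ℤ)+1) * b, ?_⟩
    have hz : (∑ i, y i * (((((k:ℤ)+1) * a i : ℤ)) : ℝ)) + ((((k:ℤ)+1) * b : ℤ) : ℝ) = 0 := by
      push_cast
      have : ∑ i, y i * (((k:ℝ)+1) * (a i : ℝ)) = ((k:ℝ)+1) * ∑ i, y i * (a i : ℝ) := by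
        rw [Finset.mul_sum]; congr 1; funext i; ring
      rw [this]
      nlinarith [h]
    rw [hz]
    have hne : (fun i => ((k:ℤ)+1) * a i) ≠ 0 := by
      intro hzero
      apply ha
      funext i
      have := congrFun hzero i
      simp only [Pi.zero_apply, mul_eq_zero] at this ⊢
      rcases this with h' | h'
      · omega
      · exact h'
    have h1 : (1:ℝ) ≤ snormZ (fun i => ((k:ℤ)+1) * a i) := one_le_snormZ hne
    simp only [abs_zero]
    positivity
  obtain ⟨i0, hi0⟩ : ∃ i, a i ≠ 0 := by
    by_contra h'; push_neg at h'; exact ha (funext h')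
  apply Set.infinite_of_injective_forall_mem (f := fun k : ℕ => fun i => ((k:ℤ)+1) * a i) ?_ key
  intro k l hkl
  have := congrFun hkl i0
  simp only at this
  have : (k:ℤ) + 1 = (l:ℤ) + 1 := mul_right_cancel₀ hi0 this
  omega

lemma sigma_unbounded_of_exact {n : ℕ} {y : Fin n → ℝ} {t : ℤ} {s : Fin n → ℤ}
    (ht : t ≠ 0) (h : ∀ i, (t:ℝ) * y i + (s i : ℝ) = 0) : ¬ BddAbove (sigmaSet y) := by
  apply not_bddAbove_of_forall_pos
  intro v hv
  refine ⟨hv, ?_⟩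
  have key : ∀ k : ℕ, (((k:ℤ)+1) * t) ∈
      {q : ℤ | ∃ p : Fin n → ℤ, ∀ i, |(q : ℝ) * y i + (p i : ℝ)| < |(q : ℝ)| ^ (-v)} := by
    intro k
    refine ⟨fun i => ((k:ℤ)+1) * s i, fun i => ?_⟩
    have hz : ((((k:ℤ)+1) * t : ℤ) : ℝ) * y i + ((((k:ℤ)+1) * s i : ℤ) : ℝ) = 0 := by
      push_cast
      nlinarith [h i]
    rw [hz, abs_zero]
    have : (((k:ℤ)+1) * t : ℤ) ≠ 0 := by
      have : (k:ℤ) + 1 ≠ 0 := by omega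
      exact mul_ne_zero this ht
    have h1 : (1:ℝ) ≤ |((((k:ℤ)+1) * t : ℤ) : ℝ)| := by
      rw [← Int.cast_abs]
      exact_mod_cast Int.one_le_abs this
    positivity
  apply Set.infinite_of_injective_forall_mem (f := fun k : ℕ => ((k:ℤ)+1) * t) ?_ key
  intro k l hkl
  simp only at hkl
  have : (k:ℤ) + 1 = (l:ℤ) + 1 := mul_right_cancel₀ ht hkl
  omega


lemma int_eq_of_abs_sub_lt_one {a b : ℤ} (h : |(a:ℝ) - (b:ℝ)| < 1) : a = b := by
  have h' : |((a - b : ℤ) : ℝ)| < 1 := by push_cast; exact h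
  rw [← Int.cast_abs] at h'
  have : |a - b| < (1:ℤ) := by exact_mod_cast h'
  rw [abs_lt] at this
  omega

lemma omega_mem {n : ℕ} {y : Fin n → ℝ} (hω : BddAbove (omegaSet y)) {u : ℝ} (hu : 0 < u)
    (H : ∀ ε : ℝ, 0 < ε → ∃ (a : Fin n → ℤ) (b : ℤ), a ≠ 0 ∧
      |(∑ i, y i * a i) + (b:ℝ)| < min ε ((snormZ a) ^ (-u))) : u ∈ omegaSet y := by
  refine ⟨hu, ?_⟩
  by_cases hex : ∃ (a : Fin n → ℤ) (b : ℤ), a ≠ 0 ∧ (∑ i, y i * a i) + (b:ℝ) = 0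
  · obtain ⟨a, b, ha, hab⟩ := hex
    exact absurd hω (omega_unbounded_of_exact ha hab)
  · push_neg at hex
    apply infinite_proj _ (fun c : (Fin n → ℤ) × ℤ =>
        c.1 ≠ 0 ∧ |(∑ i, y i * c.1 i) + (c.2:ℝ)| < (snormZ c.1) ^ (-u))
      (fun c => |(∑ i, y i * c.1 i) + (c.2:ℝ)|) Prod.fst
    · intro ε hε
      obtain ⟨a, b, ha, hab⟩ := H ε hε
      refine ⟨(a, b), ⟨ha, hab.trans_le (min_le_right _ _)⟩, ?_, hab.trans_le (min_le_left _ _)⟩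
      rcases lt_or_eq_of_le (abs_nonneg ((∑ i, y i * a i) + (b:ℝ))) with h' | h'
      · exact h'
      · exact absurd (abs_eq_zero.mp h'.symm) (hex a b ha)
    · rintro ⟨a, b⟩ ⟨a', b'⟩ hP hP' hv hv' hproj
      simp only at hproj
      subst hproj
      have : b = b' := by
        apply int_eq_of_abs_sub_lt_one
        simp only at hv hv'
        have := abs_sub_abs_le_abs_sub ((∑ i, y i * a i) + (b:ℝ)) ((∑ i, y i * a i) + (b':ℝ))
        have h2 : |((∑ i, y i * a i) + (b:ℝ)) - ((∑ i, y i * a i) + (b':ℝ))| = |(b:ℝ) - b'| := by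
          congr 1; ring
        calc |(b:ℝ) - b'| = |((∑ i, y i * a i) + (b:ℝ)) - ((∑ i, y i * a i) + (b':ℝ))| := h2.symm
          _ ≤ |(∑ i, y i * a i) + (b:ℝ)| + |(∑ i, y i * a i) + (b':ℝ)| := abs_sub _ _
          _ < 1 := by linarith
      rw [this]
    · rintro ⟨a, b⟩ ⟨_, hP2⟩
      exact ⟨b, hP2⟩

lemma sigma_mem {n : ℕ} (hn : 0 < n) {y : Fin n → ℝ} (hσ : BddAbove (sigmaSet y)) {u : ℝ}
    (hu : 0 < u)
    (H : ∀ ε : ℝ, 0 < ε → ∃ (t : ℤ) (s : Fin n → ℤ), t ≠ 0 ∧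
      ∀ i, |(t:ℝ) * y i + (s i : ℝ)| < min ε (|(t:ℝ)| ^ (-u))) : u ∈ sigmaSet y := by
  haveI : Nonempty (Fin n) := Fin.pos_iff_nonempty.mp hn
  refine ⟨hu, ?_⟩
  by_cases hex : ∃ (t : ℤ) (s : Fin n → ℤ), t ≠ 0 ∧ ∀ i, (t:ℝ) * y i + (s i : ℝ) = 0
  · obtain ⟨t, s, ht, hts⟩ := hex
    exact absurd hσ (sigma_unbounded_of_exact ht hts)
  · push_neg at hex
    apply infinite_proj _ (fun c : ℤ × (Fin n → ℤ) =>
        c.1 ≠ 0 ∧ ∀ i, |(c.1:ℝ) * y i + (c.2 i : ℝ)| < |(c.1:ℝ)| ^ (-u))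
      (fun c => Finset.univ.sup' Finset.univ_nonempty (fun i => |(c.1:ℝ) * y i + (c.2 i : ℝ)|))
      Prod.fst
    · intro ε hε
      obtain ⟨t, s, ht, hts⟩ := H ε hε
      refine ⟨(t, s), ⟨ht, fun i => (hts i).trans_le (min_le_right _ _)⟩, ?_, ?_⟩
      · dsimp only
        rcases lt_or_eq_of_le (le_trans (abs_nonneg _)
          (Finset.le_sup' (fun i => |(t:ℝ) * y i + (s i : ℝ)|) (Finset.mem_univ (Classical.arbitrary (Fin n))))) with h' | h'
        · exact h'
        · exfalso
          obtain ⟨i, hi⟩ := hex t s ht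
          apply hi
          have hle := Finset.le_sup' (fun i => |(t:ℝ) * y i + (s i : ℝ)|) (Finset.mem_univ i)
          rw [← h'] at hle
          exact abs_eq_zero.mp (le_antisymm hle (abs_nonneg _))
      · dsimp only
        rw [Finset.sup'_lt_iff]
        exact fun i _ => (hts i).trans_le (min_le_left _ _)
    · rintro ⟨t, s⟩ ⟨t', s'⟩ hP hP' hv hv' hproj
      simp only at hproj
      subst hproj
      dsimp only at hv hv'
      have : s = s' := by
        funext i
        apply int_eq_of_abs_sub_lt_one
        have h1 : |(t:ℝ) * y i + (s i : ℝ)| < 1/2 :=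
          lt_of_le_of_lt (Finset.le_sup' (fun j => |(t:ℝ) * y j + (s j : ℝ)|) (Finset.mem_univ i)) hv
        have h2 : |(t:ℝ) * y i + (s' i : ℝ)| < 1/2 :=
          lt_of_le_of_lt (Finset.le_sup' (fun j => |(t:ℝ) * y j + (s' j : ℝ)|) (Finset.mem_univ i)) hv'
        calc |(s i : ℝ) - (s' i : ℝ)|
            = |((t:ℝ) * y i + (s i : ℝ)) - ((t:ℝ) * y i + (s' i : ℝ))| := by congr 1; ring
          _ ≤ |(t:ℝ) * y i + (s i : ℝ)| + |(t:ℝ) * y i + (s' i : ℝ)| := abs_sub _ _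
          _ < 1 := by linarith
      rw [this]
    · rintro ⟨t, s⟩ ⟨_, hP2⟩
      exact ⟨s, hP2⟩


lemma abs_fract_sub_fract_lt {K : ℕ} (hK : 0 < K) {x y : ℝ}
    (h : ⌊(K:ℝ) * Int.fract x⌋ = ⌊(K:ℝ) * Int.fract y⌋) :
    |Int.fract x - Int.fract y| < 1 / K := by
  have hKR : (0:ℝ) < K := by exact_mod_cast hK
  have e1 : (↑⌊(K:ℝ) * Int.fract x⌋ : ℝ) + Int.fract ((K:ℝ) * Int.fract x) = (K:ℝ) * Int.fract x :=
    Int.floor_add_fract _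
  have e2 : (↑⌊(K:ℝ) * Int.fract y⌋ : ℝ) + Int.fract ((K:ℝ) * Int.fract y) = (K:ℝ) * Int.fract y :=
    Int.floor_add_fract _
  rw [h] at e1
  have hlt : |(K:ℝ) * Int.fract x - (K:ℝ) * Int.fract y| < 1 := by
    rw [abs_sub_lt_iff]
    constructor <;>
      nlinarith [Int.fract_nonneg ((K:ℝ) * Int.fract x), Int.fract_lt_one ((K:ℝ) * Int.fract x),
        Int.fract_nonneg ((K:ℝ) * Int.fract y), Int.fract_lt_one ((K:ℝ) * Int.fract y)]
  have e3 : Int.fract x - Int.fract y = ((K:ℝ) * Int.fract x - (K:ℝ) * Int.fract y) / K := by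
    field_simp
  rw [e3, abs_div, abs_of_pos hKR]
  gcongr


lemma floor_mul_fract_lt {K : ℕ} (hK : 0 < K) (x : ℝ) :
    0 ≤ ⌊(K:ℝ) * Int.fract x⌋ ∧ ⌊(K:ℝ) * Int.fract x⌋ < K := by
  have hKR : (0:ℝ) < K := by exact_mod_cast hK
  constructor
  · apply Int.floor_nonneg.mpr
    exact mul_nonneg hKR.le (Int.fract_nonneg x)
  · apply Int.floor_lt.mpr
    push_cast
    nlinarith [Int.fract_lt_one x]

lemma dirichlet_form {n : ℕ} (hn : 0 < n) (y : Fin n → ℝ) (N : ℕ) (hN : 1 ≤ N) :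
    ∃ (a : Fin n → ℤ) (b : ℤ), a ≠ 0 ∧ snn a ≤ N ∧
      |(∑ i, y i * a i) + (b:ℝ)| < 1 / N := by
  classical
  set L : (Fin n → ℤ) → ℝ := fun c => ∑ i, y i * c i with hL
  have hNR : (0:ℝ) < N := by exact_mod_cast hN
  set f : (Fin n → Fin (N+1)) → Fin N := fun c =>
    ⟨(⌊(N:ℝ) * Int.fract (L (fun i => (c i : ℤ)))⌋).toNat, by
      obtain ⟨h0, h1⟩ := floor_mul_fract_lt hN (L (fun i => ((c i : ℕ) : ℤ)))
      omega⟩ with hf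
  have hcard : Fintype.card (Fin N) < Fintype.card (Fin n → Fin (N+1)) := by
    simp only [Fintype.card_fin, Fintype.card_fun]
    calc N < N + 1 := Nat.lt_succ_self N
      _ ≤ (N+1)^n := Nat.le_self_pow hn.ne' _
  obtain ⟨c₁, c₂, hne, heq⟩ := Fintype.exists_ne_map_eq_of_card_lt f hcard
  set a : Fin n → ℤ := fun i => ((c₁ i : ℕ) : ℤ) - ((c₂ i : ℕ) : ℤ) with ha
  have haz : a ≠ 0 := by
    intro hz
    apply hne
    funext i
    have := congrFun hz i
    simp only [ha, Pi.zero_apply, sub_eq_zero] at this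
    exact Fin.ext (by exact_mod_cast this)
  have hbound : snn a ≤ N := by
    rw [snn_le_iff]
    intro i
    have h1 : (c₁ i : ℕ) ≤ N := Nat.lt_succ_iff.mp (c₁ i).isLt
    have h2 : (c₂ i : ℕ) ≤ N := Nat.lt_succ_iff.mp (c₂ i).isLt
    simp only [ha]
    omega
  set x₁ : ℝ := L (fun i => ((c₁ i : ℕ) : ℤ)) with hx₁
  set x₂ : ℝ := L (fun i => ((c₂ i : ℕ) : ℤ)) with hx₂
  have hfloorEq : ⌊(N:ℝ) * Int.fract x₁⌋ = ⌊(N:ℝ) * Int.fract x₂⌋ := by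
    have hh := congrArg (fun z : Fin N => (z : ℕ)) heq
    simp only [hf] at hh
    have ex1 : ⌊(N:ℝ) * Int.fract (L fun i => ((c₁ i : ℕ) : ℤ))⌋ = ⌊(N:ℝ) * Int.fract x₁⌋ := rfl
    have ex2 : ⌊(N:ℝ) * Int.fract (L fun i => ((c₂ i : ℕ) : ℤ))⌋ = ⌊(N:ℝ) * Int.fract x₂⌋ := rfl
    rw [ex1, ex2] at hh
    obtain ⟨h01, _⟩ := floor_mul_fract_lt hN x₁
    obtain ⟨h02, _⟩ := floor_mul_fract_lt hN x₂
    omega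
  refine ⟨a, ⌊x₂⌋ - ⌊x₁⌋, haz, hbound, ?_⟩
  have hkey : (∑ i, y i * (a i : ℝ)) + ((⌊x₂⌋ - ⌊x₁⌋ : ℤ) : ℝ) = Int.fract x₁ - Int.fract x₂ := by
    have hsplit : (∑ i, y i * (a i : ℝ)) = x₁ - x₂ := by
      simp only [hx₁, hx₂, hL, ha, ← Finset.sum_sub_distrib]
      congr 1
      funext i
      push_cast
      ring
    rw [hsplit, Int.fract, Int.fract]
    push_cast
    ring
  rw [hkey]
  exact abs_fract_sub_fract_lt hN hfloorEq


lemma rpow_ge_of_ge {C : ℝ} (hC : 0 ≤ C) {d : ℝ} (hd : 0 < d) {X : ℝ}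
    (hX : C^(1/d) ≤ X) : C ≤ X^d := by
  have hX0 : 0 ≤ X := le_trans (Real.rpow_nonneg hC _) hX
  calc C = (C^(1/d))^d := by
        rw [← Real.rpow_mul hC, one_div, inv_mul_cancel₀ hd.ne', Real.rpow_one]
    _ ≤ X^d := Real.rpow_le_rpow (Real.rpow_nonneg hC _) hX hd.le

lemma kernel_sigma_to_omega {n : ℕ} (y : Fin n → ℝ) {q : ℤ} (hq : q ≠ 0) (p : Fin n → ℤ)
    {Y : ℕ} (hcard : q.natAbs < (Y+1)^n) :
    ∃ (a : Fin n → ℤ) (b : ℤ), a ≠ 0 ∧ snn a ≤ Y ∧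
      (q:ℝ) * ((∑ i, y i * a i) + (b:ℝ)) = ∑ i, (a i : ℝ) * ((q:ℝ) * y i + (p i : ℝ)) := by
  classical
  set X := q.natAbs with hX
  haveI : NeZero X := ⟨by simpa [hX] using hq⟩
  set f : (Fin n → Fin (Y+1)) → ZMod X := fun c => ((∑ i, ((c i : ℕ) : ℤ) * p i : ℤ) : ZMod X)
    with hf
  have hcard' : Fintype.card (ZMod X) < Fintype.card (Fin n → Fin (Y+1)) := by
    rw [ZMod.card X]
    simp only [Fintype.card_fun, Fintype.card_fin]
    exact hcard
  obtain ⟨c₁, c₂, hne, heq⟩ := Fintype.exists_ne_map_eq_of_card_lt f hcard'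
  set a : Fin n → ℤ := fun i => ((c₁ i : ℕ) : ℤ) - ((c₂ i : ℕ) : ℤ) with ha
  have haz : a ≠ 0 := by
    intro hz
    apply hne
    funext i
    have := congrFun hz i
    simp only [ha, Pi.zero_apply, sub_eq_zero] at this
    exact Fin.ext (by exact_mod_cast this)
  have hbound : snn a ≤ Y := by
    rw [snn_le_iff]
    intro i
    have h1 : (c₁ i : ℕ) ≤ Y := Nat.lt_succ_iff.mp (c₁ i).isLt
    have h2 : (c₂ i : ℕ) ≤ Y := Nat.lt_succ_iff.mp (c₂ i).isLt
    simp only [ha]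
    omega
  set w : ℤ := ∑ i, a i * p i with hw
  have hdvd : q ∣ w := by
    rw [← Int.natAbs_dvd]
    rw [← ZMod.intCast_zmod_eq_zero_iff_dvd]
    have : (w : ZMod X) = f c₁ - f c₂ := by
      simp only [hw, hf, ha]
      push_cast
      rw [← Finset.sum_sub_distrib]
      congr 1
      funext i
      ring
    rw [this, heq, sub_self]
  refine ⟨a, w / q, haz, hbound, ?_⟩
  have hqw : q * (w / q) = w := Int.mul_ediv_cancel' hdvd
  have hqwR : (q:ℝ) * ((w / q : ℤ) : ℝ) = (w:ℝ) := by exact_mod_cast congrArg (fun z : ℤ => (z:ℝ)) hqw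
  have hwR : ((w:ℤ):ℝ) = ∑ i, (a i : ℝ) * (p i : ℝ) := by
    rw [hw]; push_cast; rfl
  rw [mul_add, hqwR, hwR, Finset.mul_sum, ← Finset.sum_add_distrib]
  congr 1
  funext i
  ring


lemma sigma_to_omega {n : ℕ} (hn : 0 < n) {y : Fin n → ℝ} (hω : BddAbove (omegaSet y))
    {v : ℝ} (hv : v ∈ sigmaSet y) {u : ℝ} (hu : 0 < u) (huv : u < n*v + n - 1) :
    u ∈ omegaSet y := by
  haveI : Nonempty (Fin n) := Fin.pos_iff_nonempty.mp hn
  obtain ⟨hv0, hSinf⟩ := hv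
  apply omega_mem hω hu
  intro ε hε
  have hnR : (0:ℝ) < n := by exact_mod_cast hn
  have hnR1 : (1:ℝ) ≤ n := by exact_mod_cast hn
  set d : ℝ := v + 1 - (1+u)/n with hd
  have hd0 : 0 < d := by
    rw [hd, sub_pos, div_lt_iff₀ hnR]
    nlinarith
  set N₀ : ℕ := ⌈(n:ℝ)^(1/d)⌉₊ + ⌈((n:ℝ)/ε)^(1/v)⌉₊ with hN₀
  obtain ⟨q, hqS, hqgt⟩ := exists_natAbs_gt hSinf N₀
  obtain ⟨p, hp⟩ := hqS
  set X : ℕ := q.natAbs with hX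
  have hqgt' : N₀ < q.natAbs := by rw [← hX]; exact hqgt
  have hq0 : q ≠ 0 := by
    intro h
    rw [h] at hqgt'
    simp at hqgt'
  have hX1 : 1 ≤ X := by
    have : q.natAbs ≠ 0 := Int.natAbs_ne_zero.mpr hq0
    omega
  set A : ℝ := (X:ℝ) with hA
  have hA1 : (1:ℝ) ≤ A := by rw [hA]; exact_mod_cast hX1
  have hA0 : (0:ℝ) < A := lt_of_lt_of_le one_pos hA1
  have hge : ∀ c : ℝ, ⌈c⌉₊ ≤ N₀ → c ≤ A := by
    intro c hc
    calc c ≤ (⌈c⌉₊ : ℝ) := Nat.le_ceil c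
      _ ≤ (N₀ : ℝ) := by exact_mod_cast hc
      _ ≤ A := by rw [hA]; exact_mod_cast hqgt.le
  have habsq : |(q:ℝ)| = A := by rw [hA, hX, Nat.cast_natAbs, Int.cast_abs]
  set Y : ℕ := ⌊A^((1:ℝ)/n)⌋₊ with hY
  have hApow1 : (1:ℝ) ≤ A^((1:ℝ)/n) := by
    calc (1:ℝ) = A^(0:ℝ) := (Real.rpow_zero A).symm
      _ ≤ A^((1:ℝ)/n) := Real.rpow_le_rpow_of_exponent_le hA1 (by positivity)
  have hY1 : 1 ≤ Y := Nat.le_floor (by exact_mod_cast hApow1)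
  have hYR1 : (1:ℝ) ≤ (Y:ℝ) := by exact_mod_cast hY1
  have hYle : (Y:ℝ) ≤ A^((1:ℝ)/n) := Nat.floor_le (by positivity)
  have hcard : X < (Y+1)^n := by
    have h1 : A < ((Y:ℝ)+1)^(n:ℕ) := by
      calc A = (A^((1:ℝ)/n))^(n:ℕ) := by
            rw [← Real.rpow_natCast (A^((1:ℝ)/n)) n, ← Real.rpow_mul hA0.le, one_div,
              inv_mul_cancel₀ (ne_of_gt hnR), Real.rpow_one]
        _ < ((Y:ℝ)+1)^(n:ℕ) :=
            pow_lt_pow_left₀ (Nat.lt_floor_add_one _) (by positivity) hn.ne'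
    have : (X:ℝ) < (((Y+1)^n : ℕ) : ℝ) := by push_cast; exact h1
    exact_mod_cast this
  obtain ⟨a, b, haz, hbd, hid⟩ := kernel_sigma_to_omega y hq0 p hcard
  refine ⟨a, b, haz, ?_⟩
  -- bound the linear form value
  have hterm : ∀ i, |(a i : ℝ)| * |(q:ℝ) * y i + (p i : ℝ)| < (Y:ℝ) * A^(-v) := by
    intro i
    apply mul_lt_mul'
    · calc |(a i : ℝ)| ≤ snormZ a := abs_le_snormZ a i
        _ ≤ (Y:ℝ) := by rw [snormZ_eq]; exact_mod_cast hbd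
    · rw [← habsq]; exact hp i
    · exact abs_nonneg _
    · exact lt_of_lt_of_le one_pos hYR1
  have hEbound : |(∑ i, y i * a i) + (b:ℝ)| * A < (n:ℝ) * Y * A^(-v) := by
    have h1 : |(∑ i, y i * a i) + (b:ℝ)| * A = |(q:ℝ) * ((∑ i, y i * a i) + (b:ℝ))| := by
      rw [abs_mul, habsq]; ring
    rw [h1, hid]
    calc |∑ i, (a i : ℝ) * ((q:ℝ) * y i + (p i : ℝ))|
        ≤ ∑ i, |(a i : ℝ) * ((q:ℝ) * y i + (p i : ℝ))| := Finset.abs_sum_le_sum_abs _ _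
      _ = ∑ i, |(a i : ℝ)| * |(q:ℝ) * y i + (p i : ℝ)| := by
          congr 1; funext i; rw [abs_mul]
      _ < ∑ _i : Fin n, (Y:ℝ) * A^(-v) :=
          Finset.sum_lt_sum_of_nonempty Finset.univ_nonempty (fun i _ => hterm i)
      _ = (n:ℝ) * Y * A^(-v) := by
          rw [Finset.sum_const, Finset.card_univ, Fintype.card_fin, nsmul_eq_mul]; ring
  have hE : |(∑ i, y i * a i) + (b:ℝ)| < (n:ℝ) * Y * A^(-v) / A :=
    (lt_div_iff₀ hA0).mpr hEbound
  -- final estimates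
  have hchain : (n:ℝ) * Y * A^(-v) / A ≤ (n:ℝ) * A^((1:ℝ)/n - v - 1) := by
    have e1 : A^((1:ℝ)/n - v - 1) = A^((1:ℝ)/n) * A^(-v) / A := by
      rw [show (1:ℝ)/n - v - 1 = (1:ℝ)/n + (-v) + (-1) by ring, Real.rpow_add hA0,
        Real.rpow_add hA0, Real.rpow_neg_one]
      ring
    calc (n:ℝ) * Y * A^(-v) / A ≤ (n:ℝ) * A^((1:ℝ)/n) * A^(-v) / A := by
          gcongr
      _ = (n:ℝ) * A^((1:ℝ)/n - v - 1) := by rw [e1]; ring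
  refine lt_of_lt_of_le hE (le_min ?_ ?_)
  · -- ≤ ε
    refine le_trans hchain ?_
    have h2 : A^((1:ℝ)/n - v - 1) ≤ A^(-v) :=
      Real.rpow_le_rpow_of_exponent_le hA1 (by
        rw [sub_le_iff_le_add]
        have : (1:ℝ)/n ≤ 1 := by
          rw [div_le_one hnR]; exact hnR1
        linarith)
    have h3 : (n:ℝ)/ε ≤ A^v := rpow_ge_of_ge (by positivity) hv0 (hge _ le_add_self)
    have h4 : A^(-v) = (A^v)⁻¹ := by rw [Real.rpow_neg hA0.le]
    have h5 : (0:ℝ) < A^v := Real.rpow_pos_of_pos hA0 v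
    calc (n:ℝ) * A^((1:ℝ)/n - v - 1) ≤ (n:ℝ) * A^(-v) := by nlinarith
      _ ≤ ε := by
          rw [h4]
          rw [div_le_iff₀ hε] at h3
          rw [mul_inv_le_iff₀ h5]
          linarith [h3]
  · -- ≤ (snormZ a)^(-u)
    have hsnpos : (0:ℝ) < snormZ a := lt_of_lt_of_le one_pos (one_le_snormZ haz)
    have hsnY : snormZ a ≤ (Y:ℝ) := by rw [snormZ_eq]; exact_mod_cast hbd
    have h6 : (Y:ℝ)^(-u) ≤ (snormZ a)^(-u) :=
      Real.rpow_le_rpow_of_nonpos hsnpos hsnY (by linarith)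
    refine le_trans hchain ?_
    have h7 : (n:ℝ) ≤ A^d := rpow_ge_of_ge hnR.le hd0 (hge _ le_self_add)
    have h8 : (A^((1:ℝ)/n))^(-u) ≤ (Y:ℝ)^(-u) :=
      Real.rpow_le_rpow_of_nonpos (lt_of_lt_of_le one_pos hYR1) hYle (by linarith)
    calc (n:ℝ) * A^((1:ℝ)/n - v - 1) ≤ A^d * A^((1:ℝ)/n - v - 1) := by
          have : (0:ℝ) ≤ A^((1:ℝ)/n - v - 1) := by positivity
          nlinarith
      _ = A^(-(u/n)) := by
          rw [← Real.rpow_add hA0]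
          congr 1
          rw [hd]
          field_simp
          ring
      _ = (A^((1:ℝ)/n))^(-u) := by
          rw [← Real.rpow_mul hA0.le]
          congr 1
          field_simp
      _ ≤ (Y:ℝ)^(-u) := h8
      _ ≤ (snormZ a)^(-u) := h6


lemma kernel_omega_to_sigma {n : ℕ} (y : Fin n → ℝ) (q : Fin n → ℤ) (p : ℤ) (j0 : Fin n)
    (hmax : (q j0).natAbs = snn q) (hq0 : q j0 ≠ 0) {K T : ℕ} (hK : 0 < K)
    (hT : snn q * K^(n-1) ≤ T) :
    ∃ (t : ℤ) (s : Fin n → ℤ), 1 ≤ t ∧ (t:ℤ) ≤ (T:ℤ) ∧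
      (∀ j, j ≠ j0 → |(t:ℝ) * y j - (s j : ℝ)| < 1/K) ∧
      (q j0 : ℝ) * ((t:ℝ) * y j0 - (s j0 : ℝ)) =
        (t:ℝ) * ((∑ i, y i * q i) + (p:ℝ)) -
          ∑ j ∈ Finset.univ.erase j0, (q j : ℝ) * ((t:ℝ) * y j - (s j : ℝ)) := by
  classical
  set X : ℕ := snn q with hX
  have hX1 : 1 ≤ X := by
    rw [← hmax]
    have := Int.natAbs_ne_zero.mpr hq0
    omega
  haveI : NeZero X := ⟨by omega⟩
  set ρ : ℕ → ℤ := fun t' => p * t' + ∑ j ∈ Finset.univ.erase j0, q j * ⌊(t':ℝ) * y j⌋ with hρ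
  set f : Fin (T+1) → ZMod X × ({j : Fin n // j ≠ j0} → Fin K) := fun t' =>
    ( ((ρ (t':ℕ) : ℤ) : ZMod X),
      fun j => ⟨(⌊(K:ℝ) * Int.fract (((t':ℕ):ℝ) * y j.1)⌋).toNat, by
        obtain ⟨h0, h1⟩ := floor_mul_fract_lt hK (((t':ℕ):ℝ) * y j.1)
        omega⟩ ) with hf
  have hcard : Fintype.card (ZMod X × ({j : Fin n // j ≠ j0} → Fin K)) <
      Fintype.card (Fin (T+1)) := by
    rw [Fintype.card_prod, ZMod.card X, Fintype.card_fun, Fintype.card_fin, Fintype.card_fin]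
    have : Fintype.card {j : Fin n // j ≠ j0} = n - 1 := by
      rw [Fintype.card_subtype_compl, Fintype.card_subtype_eq, Fintype.card_fin]
    rw [this]
    omega
  obtain ⟨t₁, t₂, htne, hteq⟩ := Fintype.exists_ne_map_eq_of_card_lt f hcard
  have main : ∀ t₁ t₂ : Fin (T+1), (t₂:ℕ) < (t₁:ℕ) → f t₁ = f t₂ →
      ∃ (t : ℤ) (s : Fin n → ℤ), 1 ≤ t ∧ (t:ℤ) ≤ (T:ℤ) ∧
      (∀ j, j ≠ j0 → |(t:ℝ) * y j - (s j : ℝ)| < 1/K) ∧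
      (q j0 : ℝ) * ((t:ℝ) * y j0 - (s j0 : ℝ)) =
        (t:ℝ) * ((∑ i, y i * q i) + (p:ℝ)) -
          ∑ j ∈ Finset.univ.erase j0, (q j : ℝ) * ((t:ℝ) * y j - (s j : ℝ)) := by
    clear htne hteq t₁ t₂
    intro t₁ t₂ hlt hfeq
    set t : ℤ := ((t₁:ℕ) : ℤ) - ((t₂:ℕ) : ℤ) with ht
    have ht1 : 1 ≤ t := by rw [ht]; omega
    have htT : t ≤ (T:ℤ) := by
      have := t₁.isLt
      rw [ht]; omega
    set sAux : Fin n → ℤ := fun j => ⌊((t₁:ℕ):ℝ) * y j⌋ - ⌊((t₂:ℕ):ℝ) * y j⌋ with hsAux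
    set w : ℤ := p * t + ∑ j ∈ Finset.univ.erase j0, q j * sAux j with hw
    have hwdecomp : w = ρ (t₁:ℕ) - ρ (t₂:ℕ) := by
      rw [hw, hρ, ht, hsAux]
      simp only
      rw [show (∑ j ∈ Finset.univ.erase j0, q j * (⌊((t₁:ℕ):ℝ) * y j⌋ - ⌊((t₂:ℕ):ℝ) * y j⌋)) =
        ∑ j ∈ Finset.univ.erase j0, (q j * ⌊((t₁:ℕ):ℝ) * y j⌋ - q j * ⌊((t₂:ℕ):ℝ) * y j⌋) from
        Finset.sum_congr rfl (fun j _ => by ring)]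
      rw [Finset.sum_sub_distrib]
      ring
    have hdvd : q j0 ∣ w := by
      rw [← Int.natAbs_dvd, hmax, ← ZMod.intCast_zmod_eq_zero_iff_dvd, hwdecomp]
      have h1 := congrArg Prod.fst hfeq
      simp only [hf] at h1
      push_cast
      rw [h1]
      ring
    set s : Fin n → ℤ := fun j => if j = j0 then -(w / q j0) else sAux j with hs
    refine ⟨t, s, ht1, htT, ?_, ?_⟩
    · intro j hj
      have hsj : s j = sAux j := by rw [hs]; simp [hj]
      have hbox : ⌊(K:ℝ) * Int.fract (((t₁:ℕ):ℝ) * y j)⌋ = ⌊(K:ℝ) * Int.fract (((t₂:ℕ):ℝ) * y j)⌋ := by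
        have h2 := congrFun (congrArg Prod.snd hfeq) ⟨j, hj⟩
        simp only [hf] at h2
        have h3 := congrArg (fun z : Fin K => (z:ℕ)) h2
        simp only at h3
        obtain ⟨h01, _⟩ := floor_mul_fract_lt hK (((t₁:ℕ):ℝ) * y j)
        obtain ⟨h02, _⟩ := floor_mul_fract_lt hK (((t₂:ℕ):ℝ) * y j)
        omega
      have hval : (t:ℝ) * y j - (s j : ℝ) =
          Int.fract (((t₁:ℕ):ℝ) * y j) - Int.fract (((t₂:ℕ):ℝ) * y j) := by
        rw [hsj, hsAux, ← Int.self_sub_floor, ← Int.self_sub_floor, ht]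
        push_cast
        ring
      rw [hval]
      exact abs_fract_sub_fract_lt hK hbox
    · have hsj0 : s j0 = -(w / q j0) := by rw [hs]; simp
      have hqs : (q j0 : ℤ) * s j0 = -w := by
        rw [hsj0, mul_neg, Int.mul_ediv_cancel' hdvd]
      have hqsR : (q j0 : ℝ) * (s j0 : ℝ) = -(w:ℝ) := by exact_mod_cast congrArg (fun z : ℤ => (z:ℝ)) hqs
      have hwR : (w:ℝ) = (p:ℝ) * (t:ℝ) + ∑ j ∈ Finset.univ.erase j0, (q j : ℝ) * (sAux j : ℝ) := by
        rw [hw]; push_cast; ring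
      have hsplit : ∑ i, y i * (q i : ℝ) = y j0 * (q j0 : ℝ) +
          ∑ j ∈ Finset.univ.erase j0, y j * (q j : ℝ) :=
        (Finset.add_sum_erase _ _ (Finset.mem_univ j0)).symm
      have hserase : ∀ j ∈ Finset.univ.erase j0, (q j : ℝ) * ((t:ℝ) * y j - (s j : ℝ)) =
          (t:ℝ) * ((q j:ℝ) * y j) - (q j : ℝ) * (sAux j : ℝ) := by
        intro j hj
        have hj' : j ≠ j0 := Finset.ne_of_mem_erase hj
        rw [hs]
        simp only [if_neg hj']
        ring
      rw [Finset.sum_congr rfl hserase, Finset.sum_sub_distrib, ← Finset.mul_sum]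
      rw [hsplit]
      rw [mul_sub, hqsR, hwR]
      rw [show ∑ j ∈ Finset.univ.erase j0, y j * (q j : ℝ) =
        ∑ j ∈ Finset.univ.erase j0, (q j:ℝ) * y j from Finset.sum_congr rfl (fun j _ => mul_comm _ _)]
      ring
  rcases Nat.lt_or_ge (t₂:ℕ) (t₁:ℕ) with h | h
  · exact main t₁ t₂ h hteq
  · have hlt : (t₁:ℕ) < (t₂:ℕ) := by
      rcases Nat.lt_or_ge (t₁:ℕ) (t₂:ℕ) with h' | h'
      · exact h'
      · exact absurd (Fin.ext (le_antisymm h h')) htne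
    exact main t₂ t₁ hlt hteq.symm


set_option maxHeartbeats 1000000 in
lemma omega_to_sigma {n : ℕ} (hn : 0 < n) {y : Fin n → ℝ} (hσ : BddAbove (sigmaSet y))
    {v : ℝ} (hv : v ∈ omegaSet y) {u : ℝ} (hu : 0 < u)
    (huv : u * (n + ((n:ℝ)-1)*v) < v) : u ∈ sigmaSet y := by
  haveI : Nonempty (Fin n) := Fin.pos_iff_nonempty.mp hn
  obtain ⟨hv0, hSinf⟩ := hv
  apply sigma_mem hn hσ hu
  intro ε hε
  have hnR : (0:ℝ) < n := by exact_mod_cast hn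
  obtain ⟨k, hk⟩ : ∃ k : ℕ, k = n - 1 := ⟨n - 1, rfl⟩
  have hkR : (k:ℝ) = (n:ℝ) - 1 := by rw [hk, Nat.cast_sub hn, Nat.cast_one]
  obtain ⟨m, hm⟩ : ∃ m : ℝ, m = v / n := ⟨_, rfl⟩
  have hm0 : 0 < m := hm ▸ div_pos hv0 hnR
  obtain ⟨e, he⟩ : ∃ e : ℝ, e = u * (1 + m * k) := ⟨_, rfl⟩
  have hmn : m * n = v := by rw [hm]; field_simp
  have hed : e < v / n := by
    have h1 : e * n = u * (n + ((n:ℝ)-1) * v) := by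
      rw [he, ← hmn, hkR]; ring
    rw [lt_div_iff₀ hnR]
    linarith
  obtain ⟨d, hd⟩ : ∃ d : ℝ, d = v / n - e := ⟨_, rfl⟩
  have hd0 : 0 < d := by rw [hd]; linarith
  obtain ⟨C, hC⟩ : ∃ C : ℝ, C = 2^k + n := ⟨_, rfl⟩
  have hC0 : (0:ℝ) < C := by rw [hC]; positivity
  obtain ⟨C₂, hC₂⟩ : ∃ C₂ : ℝ, C₂ = C * ((2:ℝ)^k)^u := ⟨_, rfl⟩
  have hC₂0 : (0:ℝ) < C₂ := by rw [hC₂, hC]; positivity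
  obtain ⟨N₀, hN₀⟩ : ∃ N₀ : ℕ, N₀ = ⌈C₂^(1/d)⌉₊ + ⌈(C/ε)^(1/(v/n))⌉₊ := ⟨_, rfl⟩
  obtain ⟨q, hqS, hqgt⟩ := exists_snn_gt hSinf N₀
  obtain ⟨p, hp⟩ := hqS
  have hqz : q ≠ 0 := by
    intro h
    rw [h] at hp
    have hz : snormZ (0 : Fin n → ℤ) = 0 := by simp [snormZ]
    rw [hz, Real.zero_rpow (neg_ne_zero.mpr hv0.ne')] at hp
    exact absurd hp (not_lt.mpr (abs_nonneg _))
  obtain ⟨X, hX⟩ : ∃ X : ℕ, X = snn q := ⟨_, rfl⟩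
  have hqgt' : N₀ < X := by rw [hX]; exact hqgt
  have hX1 : 1 ≤ X := by rw [hX]; exact one_le_snn hqz
  obtain ⟨A, hA⟩ : ∃ A : ℝ, A = (X:ℝ) := ⟨_, rfl⟩
  have hA1 : (1:ℝ) ≤ A := by rw [hA]; exact_mod_cast hX1
  have hA0 : (0:ℝ) < A := lt_of_lt_of_le one_pos hA1
  have hge : ∀ c : ℝ, ⌈c⌉₊ ≤ N₀ → c ≤ A := by
    intro c hc
    calc c ≤ (⌈c⌉₊ : ℝ) := Nat.le_ceil c
      _ ≤ (N₀ : ℝ) := by exact_mod_cast hc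
      _ ≤ A := by rw [hA]; exact_mod_cast hqgt'.le
  have hsnA : snormZ q = A := by rw [snormZ_eq, ← hX, hA]
  obtain ⟨j0, -, hj0⟩ := Finset.exists_mem_eq_sup (Finset.univ : Finset (Fin n))
    Finset.univ_nonempty (fun i => (q i).natAbs)
  have hmax : (q j0).natAbs = snn q := hj0.symm
  have hqj0 : q j0 ≠ 0 := by
    rw [← Int.natAbs_ne_zero, hmax, ← hX]
    omega
  obtain ⟨K, hKdef⟩ : ∃ K : ℕ, K = ⌊A^m⌋₊ + 1 := ⟨_, rfl⟩
  have hK0 : 0 < K := by rw [hKdef]; exact Nat.succ_pos _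
  have hKR0 : (0:ℝ) < K := by exact_mod_cast hK0
  have hAm1 : (1:ℝ) ≤ A^m := by
    calc (1:ℝ) = A^(0:ℝ) := (Real.rpow_zero A).symm
      _ ≤ A^m := Real.rpow_le_rpow_of_exponent_le hA1 hm0.le
  have hKub : (K:ℝ) ≤ 2 * A^m := by
    rw [hKdef]
    push_cast
    have := Nat.floor_le (le_trans zero_le_one hAm1)
    linarith
  have hKlb : A^m ≤ (K:ℝ) := by
    rw [hKdef]
    push_cast
    linarith [Nat.lt_floor_add_one (A^m)]
  obtain ⟨T, hTdef⟩ : ∃ T : ℕ, T = X * K^k := ⟨_, rfl⟩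
  have hT1 : 1 ≤ T := by
    rw [hTdef]
    exact Nat.mul_le_mul hX1 (Nat.one_le_pow k K hK0)
  have hTR0 : (0:ℝ) < (T:ℝ) := by exact_mod_cast hT1
  have hTub : (T:ℝ) ≤ 2^k * A^(1 + m*k) := by
    have h1 : ((T:ℕ):ℝ) = A * (K:ℝ)^k := by rw [hTdef, hA]; push_cast; ring
    have h2 : (K:ℝ)^k ≤ (2*A^m)^k := pow_le_pow_left₀ (by positivity) hKub k
    have h3 : ((2:ℝ)*A^m)^k = 2^k * A^(m*k) := by
      rw [mul_pow]
      congr 1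
      rw [← Real.rpow_natCast (A^m) k, ← Real.rpow_mul hA0.le]
    have h4 : A * (2^k * A^(m*k)) = 2^k * A^(1 + m*k) := by
      rw [Real.rpow_add hA0, Real.rpow_one]
      ring
    calc (T:ℝ) = A * (K:ℝ)^k := h1
      _ ≤ A * ((2*A^m)^k) := by nlinarith [hA0]
      _ = 2^k * A^(1 + m*k) := by rw [h3, h4]
  have hTkernel : snn q * K^(n-1) ≤ T := by
    rw [hTdef, ← hX, ← hk]
  obtain ⟨t, s, ht1, htT, hbox, hid⟩ := kernel_omega_to_sigma y q p j0 hmax hqj0 hK0 hTkernel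
  have htR1 : (1:ℝ) ≤ (t:ℝ) := by exact_mod_cast ht1
  have htRT : (t:ℝ) ≤ (T:ℝ) := by exact_mod_cast htT
  obtain ⟨B, hB⟩ : ∃ B : ℝ, B = (T:ℝ) * A^(-v) / A + n / K := ⟨_, rfl⟩
  have hp' : |(∑ i, y i * q i) + (p:ℝ)| < A^(-v) := by rw [← hsnA]; exact hp
  have hall : ∀ j, |(t:ℝ) * y j - (s j : ℝ)| < B := by
    intro j
    by_cases hj : j = j0
    · subst hj
      have hkey : |(q j : ℝ)| * |(t:ℝ) * y j - (s j : ℝ)| < (T:ℝ) * A^(-v) + k * (A / K) := by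
        rw [← abs_mul, hid]
        calc |(t:ℝ) * ((∑ i, y i * q i) + (p:ℝ)) -
              ∑ j' ∈ Finset.univ.erase j, (q j' : ℝ) * ((t:ℝ) * y j' - (s j' : ℝ))|
            ≤ |(t:ℝ) * ((∑ i, y i * q i) + (p:ℝ))| +
              |∑ j' ∈ Finset.univ.erase j, (q j' : ℝ) * ((t:ℝ) * y j' - (s j' : ℝ))| :=
              abs_sub _ _
          _ < (T:ℝ) * A^(-v) + k * (A / K) := by
              apply add_lt_add_of_lt_of_le
              · rw [abs_mul]
                apply mul_lt_mul' (by rw [abs_of_pos (by linarith : (0:ℝ) < (t:ℝ))]; exact htRT)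
                  hp' (abs_nonneg _) hTR0
              · calc |∑ j' ∈ Finset.univ.erase j, (q j' : ℝ) * ((t:ℝ) * y j' - (s j' : ℝ))|
                    ≤ ∑ j' ∈ Finset.univ.erase j, |(q j' : ℝ) * ((t:ℝ) * y j' - (s j' : ℝ))| :=
                      Finset.abs_sum_le_sum_abs _ _
                  _ ≤ ∑ j' ∈ Finset.univ.erase j, A * (1/(K:ℝ)) := by
                      apply Finset.sum_le_sum
                      intro j' hj'
                      rw [abs_mul]
                      apply mul_le_mul (by rw [← hsnA]; exact abs_le_snormZ q j')
                        (le_of_lt (hbox j' (Finset.ne_of_mem_erase hj'))) (abs_nonneg _) hA0.le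
                  _ = k * (A / K) := by
                      rw [Finset.sum_const, Finset.card_erase_of_mem (Finset.mem_univ j),
                        Finset.card_univ, Fintype.card_fin, nsmul_eq_mul, ← hk]
                      ring
      have hqjA : |(q j : ℝ)| = A := by
        rw [show |(q j : ℝ)| = (((q j).natAbs : ℕ) : ℝ) by rw [Nat.cast_natAbs, Int.cast_abs],
          hmax, ← hX, hA]
      rw [hqjA] at hkey
      have h5 : |(t:ℝ) * y j - (s j : ℝ)| < ((T:ℝ) * A^(-v) + k * (A / K))/A :=
        (lt_div_iff₀' hA0).mpr hkey
      refine lt_of_lt_of_le h5 ?_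
      rw [hB, div_le_iff₀ hA0, add_mul, div_mul_cancel₀ _ hA0.ne']
      have h7 : (k:ℝ) * (A/K) ≤ (n:ℝ)/K * A := by
        rw [div_mul_eq_mul_div, ← mul_div_assoc]
        gcongr
        omega
      linarith
    · have h8 : (1:ℝ)/K ≤ (n:ℝ)/K := by gcongr; exact_mod_cast hn
      have h9 : (0:ℝ) < (T:ℝ) * A^(-v) / A := by positivity
      calc |(t:ℝ) * y j - (s j : ℝ)| < 1/(K:ℝ) := hbox j hj
        _ ≤ B := by rw [hB]; linarith
  -- Now estimate B
  have hexp : (1 + m*(k:ℝ)) + (-v) + (-(1:ℝ)) = -(v/n) := by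
    rw [hm, hkR]
    field_simp
    ring
  have hBC : B ≤ C * A^(-(v/n)) := by
    have h1 : (T:ℝ) * A^(-v) / A ≤ 2^k * A^(-(v/n)) := by
      calc (T:ℝ) * A^(-v) / A ≤ (2^k * A^(1 + m*k)) * A^(-v) / A := by
            gcongr
        _ = 2^k * (A^(1 + m*k) * A^(-v) * A^(-(1:ℝ))) := by
            rw [Real.rpow_neg_one]
            ring
        _ = 2^k * A^(-(v/n)) := by
            rw [← Real.rpow_add hA0, ← Real.rpow_add hA0, hexp]
    have h2 : (n:ℝ) / K ≤ n * A^(-(v/n)) := by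
      have e2 : A^(-(v/n)) = (A^m)⁻¹ := by rw [← hm, Real.rpow_neg hA0.le]
      rw [e2, div_eq_mul_inv]
      gcongr
    rw [hB, hC, add_mul]
    linarith
  refine ⟨t, fun i => -(s i), by omega, fun i => ?_⟩
  have hv1 : |(t:ℝ) * y i + ((-(s i) : ℤ) : ℝ)| = |(t:ℝ) * y i - (s i : ℝ)| := by
    push_cast
    ring_nf
  rw [hv1]
  refine lt_of_lt_of_le (hall i) (le_trans hBC (le_min ?_ ?_))
  · -- ≤ ε
    have h3 : C/ε ≤ A^(v/n) := by
      apply rpow_ge_of_ge (by positivity) (div_pos hv0 hnR)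
      apply hge
      rw [hN₀]
      exact le_add_self
    have h4 : A^(-(v/n)) = (A^(v/n))⁻¹ := Real.rpow_neg hA0.le _
    have h5 : (0:ℝ) < A^(v/n) := Real.rpow_pos_of_pos hA0 _
    rw [h4]
    rw [div_le_iff₀ hε] at h3
    rw [mul_inv_le_iff₀ h5]
    linarith
  · -- ≤ |t|^(-u)
    have habs_t : |(t:ℝ)| = (t:ℝ) := abs_of_pos (by linarith)
    have hTu : ((T:ℝ))^(-u) ≤ |(t:ℝ)|^(-u) := by
      rw [habs_t]
      exact Real.rpow_le_rpow_of_nonpos (by linarith) htRT (by linarith)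
    refine le_trans ?_ hTu
    have hC₂A : C₂ ≤ A^d := by
      apply rpow_ge_of_ge hC₂0.le hd0
      apply hge
      rw [hN₀]
      exact le_self_add
    have h10 : C * A^(-d) ≤ ((2:ℝ)^k)^(-u) := by
      rw [Real.rpow_neg (by positivity : (0:ℝ) ≤ (2:ℝ)^k), Real.rpow_neg hA0.le]
      have h11 : (A^d)⁻¹ ≤ C₂⁻¹ := inv_anti₀ hC₂0 hC₂A
      calc C * (A^d)⁻¹ ≤ C * C₂⁻¹ := mul_le_mul_of_nonneg_left h11 hC0.le
        _ = (((2:ℝ)^k)^u)⁻¹ := by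
            rw [hC₂, mul_inv, ← mul_assoc, mul_inv_cancel₀ hC0.ne', one_mul]
    calc C * A^(-(v/n)) = (C * A^(-d)) * A^(-e) := by
          rw [show -(v/n) = -d + -e by rw [hd]; ring, Real.rpow_add hA0]
          ring
      _ ≤ ((2:ℝ)^k)^(-u) * A^(-e) :=
          mul_le_mul_of_nonneg_right h10 (Real.rpow_nonneg hA0.le _)
      _ = ((2:ℝ)^k * A^(1 + m*k))^(-u) := by
          rw [Real.mul_rpow (by positivity : (0:ℝ) ≤ (2:ℝ)^k) (Real.rpow_nonneg hA0.le _)]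
          congr 1
          rw [← Real.rpow_mul hA0.le]
          congr 1
          rw [he]
          ring
      _ ≤ ((T:ℝ))^(-u) := Real.rpow_le_rpow_of_nonpos hTR0 hTub (by linarith)


lemma half_mem_omega {n : ℕ} (hn : 0 < n) (y : Fin n → ℝ) (hω : BddAbove (omegaSet y)) :
    (1/2 : ℝ) ∈ omegaSet y := by
  apply omega_mem hω (by norm_num)
  intro ε hε
  obtain ⟨N, hNdef⟩ : ∃ N : ℕ, N = ⌈1/ε⌉₊ + 1 := ⟨_, rfl⟩
  have hN1 : 1 ≤ N := by omega
  have hNR : (1:ℝ) ≤ N := by exact_mod_cast hN1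
  have hNR0 : (0:ℝ) < N := by linarith
  obtain ⟨a, b, haz, hbd, hval⟩ := dirichlet_form hn y N hN1
  refine ⟨a, b, haz, ?_⟩
  refine lt_of_lt_of_le hval (le_min ?_ ?_)
  · -- 1/N ≤ ε
    have h1 : 1/ε ≤ (N:ℝ) := by
      calc 1/ε ≤ (⌈1/ε⌉₊ : ℝ) := Nat.le_ceil _
        _ ≤ (N:ℝ) := by rw [hNdef]; push_cast; linarith
    rw [div_le_iff₀ hNR0]
    rw [div_le_iff₀ hε] at h1
    linarith
  · -- 1/N ≤ snormZ a ^ (-(1/2))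
    have hsn1 : (1:ℝ) ≤ snormZ a := one_le_snormZ haz
    have hsnN : snormZ a ≤ (N:ℝ) := by rw [snormZ_eq]; exact_mod_cast hbd
    have h2 : (N:ℝ)^(-(1/2:ℝ)) ≤ (snormZ a)^(-(1/2:ℝ)) :=
      Real.rpow_le_rpow_of_nonpos (by linarith) hsnN (by norm_num)
    have h3 : (N:ℝ)^(-(1:ℝ)) ≤ (N:ℝ)^(-(1/2:ℝ)) :=
      Real.rpow_le_rpow_of_exponent_le hNR (by norm_num)
    calc 1/(N:ℝ) = (N:ℝ)^(-(1:ℝ)) := by rw [Real.rpow_neg_one, one_div]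
      _ ≤ (N:ℝ)^(-(1/2:ℝ)) := h3
      _ ≤ (snormZ a)^(-(1/2:ℝ)) := h2

end CasselsAux

open CasselsAux

/-- Cassels' transference inequality: for `y ∈ ℝⁿ` with finite exponents,
`(ω(y) − n + 1)/n ≥ σ(y) ≥ 1/(n − 1 + n/ω(y))`; in particular `ω(y) = n ↔ σ(y) = 1/n`. -/
theorem cassels_transference {n : ℕ} (hn : 0 < n) (y : Fin n → ℝ)
    (hω : BddAbove (omegaSet y)) (hσ : BddAbove (sigmaSet y)) :
    (sSup (omegaSet y) - n + 1) / n ≥ sSup (sigmaSet y) ∧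
    sSup (sigmaSet y) ≥ 1 / (n - 1 + n / sSup (omegaSet y)) ∧
    (sSup (omegaSet y) = n ↔ sSup (sigmaSet y) = 1 / n) := by
  have hnR : (0:ℝ) < n := by exact_mod_cast hn
  have hnR1 : (1:ℝ) ≤ n := by exact_mod_cast hn
  have F1 : (1/2 : ℝ) ∈ omegaSet y := half_mem_omega hn y hω
  set w0 := sSup (omegaSet y) with hw0
  set s0 := sSup (sigmaSet y) with hs0
  have hwhalf : (1/2 : ℝ) ≤ w0 := le_csSup hω F1
  have hw0pos : 0 < w0 := by linarith
  -- sigmaSet is nonempty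
  have hD : (1:ℝ) ≤ (n:ℝ) + ((n:ℝ)-1) * (1/2) := by nlinarith
  obtain ⟨u₀, hu₀def⟩ : ∃ u₀ : ℝ, u₀ = (1/4) / ((n:ℝ) + ((n:ℝ)-1) * (1/2)) := ⟨_, rfl⟩
  have hu₀pos : 0 < u₀ := by rw [hu₀def]; positivity
  have hu₀mem : u₀ ∈ sigmaSet y := by
    apply omega_to_sigma hn hσ F1 hu₀pos
    have : u₀ * ((n:ℝ) + ((n:ℝ)-1) * (1/2)) = 1/4 := by
      rw [hu₀def]
      exact div_mul_cancel₀ _ (ne_of_gt (lt_of_lt_of_le one_pos hD))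
    rw [this]
    norm_num
  have hs0lb : u₀ ≤ s0 := le_csSup hσ hu₀mem
  have hs0pos : 0 < s0 := lt_of_lt_of_le hu₀pos hs0lb
  -- transference inequality 1
  have P1 : ∀ v ∈ sigmaSet y, (n:ℝ)*v + n - 1 ≤ w0 := by
    intro v hv
    by_contra h
    push_neg at h
    obtain ⟨u, hudef⟩ : ∃ u : ℝ, u = (w0 + ((n:ℝ)*v + n - 1))/2 := ⟨_, rfl⟩
    have h1 : w0 < u := by rw [hudef]; linarith
    have h2 : u < (n:ℝ)*v + n - 1 := by rw [hudef]; linarith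
    have humem : u ∈ omegaSet y := sigma_to_omega hn hω hv (by linarith) h2
    have := le_csSup hω humem
    linarith
  have part1 : s0 ≤ (w0 - n + 1)/n := by
    apply csSup_le ⟨u₀, hu₀mem⟩
    intro v hv
    have := P1 v hv
    rw [le_div_iff₀ hnR]
    linarith
  -- transference inequality 2
  have hden : (0:ℝ) < ((n:ℝ)-1)*w0 + n := by nlinarith
  have part2 : w0 / (((n:ℝ)-1)*w0 + n) ≤ s0 := by
    by_contra h
    push_neg at h
    obtain ⟨u, hudef⟩ : ∃ u : ℝ, u = (s0 + w0 / (((n:ℝ)-1)*w0 + n))/2 := ⟨_, rfl⟩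
    have h1 : s0 < u := by rw [hudef]; linarith
    have h2 : u < w0 / (((n:ℝ)-1)*w0 + n) := by rw [hudef]; linarith
    have hupos : 0 < u := lt_trans hs0pos h1
    have hu1 : u * (((n:ℝ)-1)*w0 + n) < w0 := (lt_div_iff₀ hden).mp h2
    have h1u : 0 < 1 - ((n:ℝ)-1)*u := by nlinarith
    have hclt : (n:ℝ)*u / (1 - ((n:ℝ)-1)*u) < w0 := by
      rw [div_lt_iff₀ h1u]
      nlinarith
    obtain ⟨v, hvS, hcv⟩ := exists_lt_of_lt_csSup ⟨1/2, F1⟩ hclt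
    have huv : u * ((n:ℝ) + ((n:ℝ)-1)*v) < v := by
      rw [div_lt_iff₀ h1u] at hcv
      nlinarith
    have humem : u ∈ sigmaSet y := omega_to_sigma hn hσ hvS hupos huv
    have := le_csSup hσ humem
    linarith
  have hdenalt : (n:ℝ) - 1 + (n:ℝ)/w0 = (((n:ℝ)-1)*w0 + n)/w0 := by
    field_simp
  have part2' : 1 / ((n:ℝ) - 1 + (n:ℝ)/w0) ≤ s0 := by
    rw [hdenalt, one_div_div]
    exact part2
  refine ⟨part1, part2', ?_⟩
  constructor
  · intro hwn
    have hub : s0 ≤ 1/n := by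
      rw [hwn] at part1
      calc s0 ≤ ((n:ℝ) - n + 1)/n := part1
        _ = 1/n := by ring_nf
    have hlb : 1/(n:ℝ) ≤ s0 := by
      rw [hwn] at part2
      have he : ((n:ℝ)-1)*n + n = n*n := by ring
      rw [he] at part2
      have : (n:ℝ)/(n*n) = 1/n := by
        field_simp
      rw [this] at part2
      exact part2
    linarith
  · intro hsn
    rw [hsn] at part1 part2
    have hge : (n:ℝ) ≤ w0 := by
      rw [le_div_iff₀ hnR] at part1
      have hone : (1/(n:ℝ))*(n:ℝ) = 1 := div_mul_cancel₀ 1 hnR.ne'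
      linarith
    have hle : w0 ≤ n := by
      rw [div_le_div_iff₀ hden hnR] at part2
      nlinarith
    linarith
end

section
/- Let k ∈ ℕ and let Γ, Γ' be discrete subgroups of ℝ^k with Γ ⊆ Γ' and rk(Γ') = rk(Γ) + 1, and let v ∈ Γ' \ Γ_ℝ. Then the covolume satisfies ‖Γ'‖ ≤ ‖Γ‖ · ‖v‖ whenever Γ' = Γ + ℤv, where ‖Γ‖ denotes the volume of Γ_ℝ/Γ (with ‖{0}‖ = 1). (Submultiplicativity of covolume.) -/
/-!
For the Gram matrix `G` of `w` and `b = (⟪w i, v⟫)ᵢ`, the Gram matrix of `w` followed by `v` is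
the block matrix `[[G, b], [bᵀ, ‖v‖²]]`. Since `w` is linearly independent, `G` is positive
definite, and the Schur complement formula gives `det G · (‖v‖² - bᵀ G⁻¹ b)`; the subtracted term
is nonnegative because `G⁻¹` is positive definite, so `‖Γ'‖² ≤ ‖Γ‖² ‖v‖²`.
-/

open Matrix

/-- The covolume of the discrete subgroup of `ℝ^k` with `ℤ`-basis `w : Fin j → ℝ^k`:
the square root of the Gram determinant (the volume of `Γ_ℝ/Γ`; for `j = 0` this is `1`). -/
noncomputable def covolBasis {k j : ℕ} (w : Fin j → EuclideanSpace ℝ (Fin k)) : ℝ :=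
  Real.sqrt (Matrix.det (Matrix.of fun a b : Fin j => (inner ℝ (w a) (w b) : ℝ)))

namespace Matrix

section Gram

variable {𝕜 E : Type*} [Inner 𝕜 E]

lemma gram_sumElim {m n : Type*} (u : m → E) (u' : n → E) :
    gram 𝕜 (Sum.elim u u') =
      fromBlocks (gram 𝕜 u) (of fun i j => inner 𝕜 (u i) (u' j))
        (of fun i j => inner 𝕜 (u' i) (u j)) (gram 𝕜 u') := by
  ext (i | i) (j | j) <;> rfl

lemma det_gram_snoc [CommRing 𝕜] {j : ℕ} (w : Fin j → E) (v : E) :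
    (gram 𝕜 (Fin.snoc w v)).det = (gram 𝕜 (Sum.elim w fun _ : Fin 1 => v)).det := by
  have h : (Fin.snoc w v : Fin (j + 1) → E) ∘ finSumFinEquiv = Sum.elim w fun _ => v := by
    funext i
    rcases i with i | i
    · exact Fin.snoc_castSucc (α := fun _ => E) ..
    · simp [Fin.snoc, Subsingleton.elim i 0]
  rw [← h]
  exact (det_submatrix_equiv_self finSumFinEquiv (gram 𝕜 _)).symm

end Gram

variable {E : Type*} [NormedAddCommGroup E] [InnerProductSpace ℝ E]

theorem det_gram_sumElim_le {ι : Type*} [Fintype ι] [DecidableEq ι] {u : ι → E}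
    (hu : LinearIndependent ℝ u) (v : E) :
    (gram ℝ (Sum.elim u fun _ : Fin 1 => v)).det ≤ (gram ℝ u).det * ‖v‖ ^ 2 := by
  have hG := posDef_gram_of_linearIndependent hu
  let := hG.isUnit.invertible
  set B : Matrix ι (Fin 1) ℝ := of fun i _ => inner ℝ (u i) v
  have hC : (of fun _ j => inner ℝ v (u j) : Matrix (Fin 1) ι ℝ) = Bᴴ := by
    ext _ j
    simp [B, real_inner_comm]
  have hschur : 0 ≤ (Bᴴ * ⅟(gram ℝ u) * B) 0 0 := by
    rw [invOf_eq_nonsing_inv]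
    exact (hG.posSemidef.inv.conjTranspose_mul_mul_same B).diag_nonneg
  rw [gram_sumElim, det_fromBlocks₁₁, hC, det_fin_one]
  gcongr
  · exact hG.posSemidef.det_nonneg
  · simpa [gram_apply, real_inner_self_eq_norm_sq] using hschur

theorem det_gram_snoc_le {j : ℕ} {w : Fin j → E} (hw : LinearIndependent ℝ w) (v : E) :
    (gram ℝ (Fin.snoc w v)).det ≤ (gram ℝ w).det * ‖v‖ ^ 2 :=
  det_gram_snoc (𝕜 := ℝ) w v ▸ det_gram_sumElim_le hw v

end Matrix

theorem covol_submultiplicative_general {k j : ℕ} (w : Fin j → EuclideanSpace ℝ (Fin k))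
    (v : EuclideanSpace ℝ (Fin k)) (hw : LinearIndependent ℝ w) :
    covolBasis (Fin.snoc w v) ≤ covolBasis w * ‖v‖ :=
  calc covolBasis (Fin.snoc w v) = √(gram ℝ (Fin.snoc w v)).det := rfl
    _ ≤ √((gram ℝ w).det * ‖v‖ ^ 2) := Real.sqrt_le_sqrt (det_gram_snoc_le hw v)
    _ = covolBasis w * ‖v‖ := by
      rw [Real.sqrt_mul (posSemidef_gram ℝ w).det_nonneg, Real.sqrt_sq (norm_nonneg v)]
      rfl

/-- Submultiplicativity of covolume: if `Γ` is a discrete subgroup of `ℝ^k` with `ℤ`-basis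
`w : Fin j → ℝ^k` and `v ∉ Γ_ℝ`, so that `Γ' = Γ + ℤv` is a discrete subgroup with
`rk(Γ') = rk(Γ) + 1` and `ℤ`-basis `w` followed by `v`, then `‖Γ'‖ ≤ ‖Γ‖ · ‖v‖`. -/
theorem covol_submultiplicative {k j : ℕ} (w : Fin j → EuclideanSpace ℝ (Fin k))
    (v : EuclideanSpace ℝ (Fin k)) (hw : LinearIndependent ℝ w)
    (hv : v ∉ Submodule.span ℝ (Set.range w)) :
    covolBasis (Fin.snoc w v) ≤ covolBasis w * ‖v‖ :=
  covol_submultiplicative_general w v hw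
end
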